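/- arXiv:1707.02090 — 5 statements merged into one kernel-verified Lean document; each statement's English description precedes it below -/
import Mathlib

section
/- Let E be a Bernoulli random variable with parameter p ∈ [0,1]. Then for any real λ with |λ| ≤ 1, the moment generating function satisfies E[exp(λ(p - E))] ≤ exp(λ²p). -/
open MeasureTheory

lemma exp_le_one_add_add_sq {x : ℝ} (hx : |x| ≤ 1) :
    Real.exp x ≤ 1 + x + x ^ 2 := by
  have h := Real.exp_bound hx (by norm_num : 0 < 2)
  have hsum : ∑ i ∈ Finset.range 2, x ^ i / (Nat.factorial i : ℝ) = 1 + x := by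
    simp [Finset.sum_range_succ, Nat.factorial]
  rw [hsum] at h
  have h2 : Real.exp x - (1 + x) ≤ |x| ^ 2 * ((2 + 1 : ℕ) / ((Nat.factorial 2 : ℕ) * 2)) :=
    le_trans (le_abs_self _) h
  rw [sq_abs] at h2
  norm_num [Nat.factorial] at h2
  nlinarith [sq_nonneg x]

lemma integrable_dirac' {f : ℝ → ℝ} (hf : Measurable f) (a : ℝ) :
    Integrable f (Measure.dirac a) := by
  refine ⟨hf.aestronglyMeasurable, ?_⟩
  have h : ∫⁻ x, ‖f x‖₊ ∂Measure.dirac a = ‖f a‖₊ :=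
    lintegral_dirac' a (measurable_coe_nnreal_ennreal.comp hf.nnnorm)
  simp [HasFiniteIntegral, h]

/-- If `E` is a Bernoulli random variable with parameter `p ∈ [0,1]`, then for
any `λ` with `|λ| ≤ 1`, `𝔼[exp(λ(p - E))] ≤ exp(λ² p)`. -/
theorem bernoulli_centered_mgf_bound
    {Ω : Type*} [MeasurableSpace Ω] (μ : Measure Ω) [IsProbabilityMeasure μ]
    (p : ℝ) (hp0 : 0 ≤ p) (hp1 : p ≤ 1)
    (E : Ω → ℝ) (hE : Measurable E)
    (hlaw : Measure.map E μ =
      ENNReal.ofReal p • Measure.dirac (1 : ℝ) + ENNReal.ofReal (1 - p) • Measure.dirac (0 : ℝ))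
    (lam : ℝ) (hlam : |lam| ≤ 1) :
    ∫ ω, Real.exp (lam * (p - E ω)) ∂μ ≤ Real.exp (lam ^ 2 * p) := by
  have hmeas : Measurable fun x : ℝ => Real.exp (lam * (p - x)) := by
    exact (Real.measurable_exp.comp (measurable_const.mul (measurable_const.sub measurable_id)))
  have hmap : ∫ ω, Real.exp (lam * (p - E ω)) ∂μ
      = ∫ x, Real.exp (lam * (p - x)) ∂(Measure.map E μ) := by
    rw [integral_map hE.aemeasurable hmeas.aestronglyMeasurable]
  rw [hmap, hlaw]
  rw [integral_add_measure, integral_smul_measure, integral_smul_measure,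
    integral_dirac, integral_dirac]
  · have hlhs : (ENNReal.ofReal p).toReal • Real.exp (lam * (p - 1))
        + (ENNReal.ofReal (1 - p)).toReal • Real.exp (lam * (p - 0))
        = p * Real.exp (lam * (p - 1)) + (1 - p) * Real.exp (lam * p) := by
      rw [ENNReal.toReal_ofReal hp0, ENNReal.toReal_ofReal (by linarith)]
      simp [smul_eq_mul]
    rw [hlhs]
    -- key inequality
    have hexp : Real.exp (-lam) ≤ 1 + (-lam) + lam ^ 2 := by
      have := exp_le_one_add_add_sq (x := -lam) (by rwa [abs_neg])
      simpa using this
    have h1 : p * Real.exp (-lam) + (1 - p) ≤ 1 + p * (lam ^ 2 - lam) := by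
      nlinarith [Real.exp_pos (-lam)]
    have h2 : (1 : ℝ) + p * (lam ^ 2 - lam) ≤ Real.exp (p * (lam ^ 2 - lam)) := by
      linarith [Real.add_one_le_exp (p * (lam ^ 2 - lam))]
    calc p * Real.exp (lam * (p - 1)) + (1 - p) * Real.exp (lam * p)
        = Real.exp (lam * p) * (p * Real.exp (-lam) + (1 - p)) := by
          rw [show lam * (p - 1) = lam * p + (-lam) by ring, Real.exp_add]; ring
      _ ≤ Real.exp (lam * p) * Real.exp (p * (lam ^ 2 - lam)) := by
          apply mul_le_mul_of_nonneg_left (le_trans h1 h2) (Real.exp_pos _).le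
      _ = Real.exp (lam ^ 2 * p) := by rw [← Real.exp_add]; ring_nf
  · exact (integrable_dirac' hmeas 1).smul_measure ENNReal.ofReal_ne_top
  · exact (integrable_dirac' hmeas 0).smul_measure ENNReal.ofReal_ne_top
end

section
/- Let a₁, …, a_N ∈ {0,1}^k and let r be an integer with r > 96 log N. Then there exists a matrix Q ∈ {−1,1}^{r×k} such that for all u, v ∈ [N], (r/2)‖a_u − a_v‖₂² ≤ ‖Q a_u − Q a_v‖₂² ≤ (3r/2)‖a_u − a_v‖₂². -/
/-!
Write `Y = ∑ᵢ εᵢ dᵢ` for one row of a uniformly random sign matrix applied to `d`, so that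
`𝔼 Y² = ‖d‖²`, and bound both tails of `∑ₗ Yₗ²` over the `r` independent rows by Chernoff's
method with parameter `λ = 1 / (8‖d‖²)`. Upper tail: `Y` is sub-Gaussian,
`𝔼 e^{tY} = ∏ᵢ cosh (t dᵢ) ≤ e^{t²‖d‖²/2}`, and averaging `e^{√(2λ) x Y}` over a standard
Gaussian `x` turns this into `𝔼 e^{λY²} ≤ (1 - 2λ‖d‖²)^{-1/2} = 2/√3`. Lower tail: `e^{-x} ≤ 1 - x + x²/2`
reduces `𝔼 e^{-λY²}` to the moments `𝔼 Y² = ‖d‖²` and `𝔼 Y⁴ ≤ 3‖d‖⁴`. Either tail has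
probability at most `e^{-r/32}`, and since `2N² < e^{r/32}` once `r > 96 log N` and `N ≥ 2`, a
union bound over the pairs `(u, v)` leaves a good matrix.

Probabilities are counted: an average over sign patterns `σ : Fin k → Bool` is a sum divided by
`2 ^ k`.
-/

open Real Finset MeasureTheory

lemma exp_neg_le_one_sub_add_sq_div_two {t : ℝ} (ht : 0 ≤ t) : exp (-t) ≤ 1 - t + t ^ 2 / 2 := by
  have hcubic : 1 + t + t ^ 2 / 2 + t ^ 3 / 6 ≤ exp t := by
    simpa [Finset.sum_range_succ, Nat.factorial] using sum_le_exp_of_nonneg ht 4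
  rw [exp_neg, inv_le_iff_one_le_mul₀' (exp_pos t)]
  nlinarith [pow_nonneg ht 3, pow_nonneg ht 4, pow_nonneg ht 5, sq_nonneg (t - 1)]

lemma inv_sqrt_three_div_four_le : (√(3 / 4))⁻¹ ≤ exp (5 / 32) := by
  rw [← sqrt_inv, sqrt_le_iff]
  have := add_one_le_exp (5 / 32 : ℝ)
  constructor <;> nlinarith

lemma exp_mul_sub_sq_half_eq (t x : ℝ) :
    exp (t * x - x ^ 2 / 2) = exp (t ^ 2 / 2) * exp (-(1 / 2) * (x - t) ^ 2) := by
  rw [← exp_add]; ring_nf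

lemma integrable_exp_mul_sub_sq_half (t : ℝ) : Integrable fun x : ℝ => exp (t * x - x ^ 2 / 2) := by
  simp_rw [exp_mul_sub_sq_half_eq t]
  exact ((integrable_exp_neg_mul_sq (by norm_num)).comp_sub_right t).const_mul _

lemma integral_exp_mul_sub_sq_half (t : ℝ) :
    ∫ x, exp (t * x - x ^ 2 / 2) = √(2 * π) * exp (t ^ 2 / 2) := by
  simp_rw [exp_mul_sub_sq_half_eq t]
  rw [integral_const_mul, integral_sub_right_eq_self (fun x => exp (-(1 / 2) * x ^ 2)) t,
    integral_gaussian, mul_comm]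
  congr 2
  ring

lemma sum_exp_mul_sq_le {ι : Type*} [Fintype ι] (Y : ι → ℝ) {M c l : ℝ} (hl : 0 ≤ l)
    (hlc : 2 * l * c < 1) (h : ∀ t, ∑ i, exp (t * Y i) ≤ M * exp (c * t ^ 2 / 2)) :
    ∑ i, exp (l * Y i ^ 2) ≤ M / √(1 - 2 * l * c) := by
  set s := √(2 * l)
  have hs : s ^ 2 = 2 * l := sq_sqrt (by positivity)
  have hπ : 0 < √(2 * π) := by positivity
  have hrepr : ∀ y, exp (l * y ^ 2) = (√(2 * π))⁻¹ * ∫ x, exp (s * y * x - x ^ 2 / 2) := by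
    intro y
    rw [integral_exp_mul_sub_sq_half, inv_mul_cancel_left₀ hπ.ne', mul_pow, hs]
    ring_nf
  have hpoint : ∀ x, ∑ i, exp (s * Y i * x - x ^ 2 / 2)
      ≤ M * exp (-((1 - 2 * l * c) / 2) * x ^ 2) := by
    intro x
    calc ∑ i, exp (s * Y i * x - x ^ 2 / 2) = (∑ i, exp (s * x * Y i)) * exp (-(x ^ 2 / 2)) := by
          rw [Finset.sum_mul]
          congr! 1 with i
          rw [← exp_add]; ring_nf
      _ ≤ M * exp (c * (s * x) ^ 2 / 2) * exp (-(x ^ 2 / 2)) := by gcongr; exact h _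
      _ = M * exp (-((1 - 2 * l * c) / 2) * x ^ 2) := by
          rw [mul_assoc, ← exp_add, mul_pow, hs]; ring_nf
  calc ∑ i, exp (l * Y i ^ 2)
      = (√(2 * π))⁻¹ * ∫ x, ∑ i, exp (s * Y i * x - x ^ 2 / 2) := by
        rw [integral_finsetSum _ fun i _ => integrable_exp_mul_sub_sq_half _, Finset.mul_sum]
        exact Finset.sum_congr rfl fun i _ => hrepr _
    _ ≤ (√(2 * π))⁻¹ * ∫ x, M * exp (-((1 - 2 * l * c) / 2) * x ^ 2) := by
        refine mul_le_mul_of_nonneg_left (integral_mono ?_ ?_ hpoint) (by positivity)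
        · exact integrable_finsetSum _ fun i _ => integrable_exp_mul_sub_sq_half _
        · exact (integrable_exp_neg_mul_sq (by linarith)).const_mul _
    _ = M / √(1 - 2 * l * c) := by
        rw [integral_const_mul, integral_gaussian, div_div_eq_mul_div, mul_comm π,
          sqrt_div' _ (by linarith), sqrt_mul' _ pi_pos.le]
        field_simp

def rademacher (b : Bool) : ℝ := if b then 1 else -1

def signedSum {k : ℕ} (σ : Fin k → Bool) (d : Fin k → ℝ) : ℝ :=
  (fun i => rademacher (σ i)) ⬝ᵥ d

lemma sum_fun_bool_const (k : ℕ) (c : ℝ) : ∑ _σ : Fin k → Bool, c = 2 ^ k * c := by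
  simp

lemma sum_comp_signedSum_succ {k : ℕ} (g : ℝ → ℝ) (d : Fin (k + 1) → ℝ) :
    ∑ σ, g (signedSum σ d) =
      ∑ τ, (g (signedSum τ (Fin.tail d) + d 0) + g (signedSum τ (Fin.tail d) - d 0)) := by
  rw [← (Fin.consEquiv fun _ => Bool).sum_comp, Fintype.sum_prod_type, Fintype.sum_bool,
    ← Finset.sum_add_distrib]
  refine Finset.sum_congr rfl fun τ _ => ?_
  simp only [signedSum, dotProduct, Fin.sum_univ_succ, Fin.consEquiv_apply, Fin.cons_zero,
    Fin.cons_succ, rademacher, Fin.tail, if_true, Bool.false_eq_true, if_false]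
  congr 2 <;> ring

lemma sum_signedSum_sq {k : ℕ} (d : Fin k → ℝ) :
    ∑ σ, signedSum σ d ^ 2 = 2 ^ k * ∑ i, d i ^ 2 := by
  induction k with
  | zero => simp [signedSum]
  | succ k ih =>
    rw [sum_comp_signedSum_succ (· ^ 2), Fin.sum_univ_succ]
    calc ∑ τ, ((signedSum τ (Fin.tail d) + d 0) ^ 2 + (signedSum τ (Fin.tail d) - d 0) ^ 2)
        = ∑ τ, (2 * signedSum τ (Fin.tail d) ^ 2 + 2 * d 0 ^ 2) := by
          congr! 1 with τ; ring
      _ = _ := by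
          rw [Finset.sum_add_distrib, ← Finset.mul_sum, ih]
          simp only [Fin.tail, sum_fun_bool_const]
          ring

lemma sum_signedSum_pow_four {k : ℕ} (d : Fin k → ℝ) :
    ∑ σ, signedSum σ d ^ 4 = 2 ^ k * (3 * (∑ i, d i ^ 2) ^ 2 - 2 * ∑ i, d i ^ 4) := by
  induction k with
  | zero => simp [signedSum]
  | succ k ih =>
    rw [sum_comp_signedSum_succ (· ^ 4), Fin.sum_univ_succ, Fin.sum_univ_succ (fun i => d i ^ 4)]
    calc ∑ τ, ((signedSum τ (Fin.tail d) + d 0) ^ 4 + (signedSum τ (Fin.tail d) - d 0) ^ 4)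
        = ∑ τ, (2 * signedSum τ (Fin.tail d) ^ 4 + 12 * d 0 ^ 2 * signedSum τ (Fin.tail d) ^ 2
            + 2 * d 0 ^ 4) := by
          congr! 1 with τ; ring
      _ = _ := by
          rw [Finset.sum_add_distrib, Finset.sum_add_distrib, ← Finset.mul_sum, ← Finset.mul_sum,
            ih, sum_signedSum_sq]
          simp only [Fin.tail, sum_fun_bool_const]
          ring

lemma sum_exp_mul_signedSum_le {k : ℕ} (d : Fin k → ℝ) (t : ℝ) :
    ∑ σ, exp (t * signedSum σ d) ≤ 2 ^ k * exp ((∑ i, d i ^ 2) * t ^ 2 / 2) := by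
  induction k with
  | zero => simp [signedSum]
  | succ k ih =>
    rw [sum_comp_signedSum_succ (fun y => exp (t * y)), Fin.sum_univ_succ]
    calc ∑ τ, (exp (t * (signedSum τ (Fin.tail d) + d 0))
          + exp (t * (signedSum τ (Fin.tail d) - d 0)))
        = 2 * cosh (t * d 0) * ∑ τ, exp (t * signedSum τ (Fin.tail d)) := by
          rw [Finset.mul_sum]
          congr! 1 with τ
          rw [cosh_eq, mul_add, mul_sub, exp_add, exp_sub, exp_neg]
          field_simp
      _ ≤ 2 * exp ((t * d 0) ^ 2 / 2) * (2 ^ k * exp ((∑ i, Fin.tail d i ^ 2) * t ^ 2 / 2)) := by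
          gcongr
          · exact cosh_le_exp_half_sq _
          · exact ih _
      _ = _ := by
          rw [pow_succ, mul_mul_mul_comm, ← exp_add]
          simp only [Fin.tail]
          ring_nf

lemma sum_exp_signedSum_sq_sub_le {k : ℕ} (d : Fin k → ℝ) (hd : 0 < ∑ i, d i ^ 2) :
    ∑ σ, exp ((signedSum σ d ^ 2 - 3 * (∑ i, d i ^ 2) / 2) / (8 * ∑ i, d i ^ 2))
      ≤ 2 ^ k * exp (-(1 / 32)) := by
  have hsq := sum_exp_mul_sq_le (fun σ => signedSum σ d) (l := 1 / (8 * ∑ i, d i ^ 2))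
    (by positivity) (by field_simp; norm_num) (sum_exp_mul_signedSum_le d)
  generalize ∑ i, d i ^ 2 = S at hd hsq ⊢
  calc ∑ σ, exp ((signedSum σ d ^ 2 - 3 * S / 2) / (8 * S))
      = exp (-(3 / 16)) * ∑ σ, exp (1 / (8 * S) * signedSum σ d ^ 2) := by
        rw [Finset.mul_sum]
        congr! 1 with σ
        rw [← exp_add]
        congr 1
        field_simp
        ring
    _ ≤ exp (-(3 / 16)) * (2 ^ k / √(3 / 4)) := by
        have h34 : 1 - 2 * (1 / (8 * S)) * S = 3 / 4 := by field_simp; norm_num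
        rw [h34] at hsq
        gcongr
    _ ≤ exp (-(3 / 16)) * (2 ^ k * exp (5 / 32)) := by
        rw [div_eq_mul_inv (2 ^ k : ℝ)]; gcongr; exact inv_sqrt_three_div_four_le
    _ = 2 ^ k * exp (-(1 / 32)) := by
        rw [mul_left_comm, ← exp_add]; norm_num

lemma sum_exp_sub_signedSum_sq_le {k : ℕ} (d : Fin k → ℝ) (hd : 0 < ∑ i, d i ^ 2) :
    ∑ σ, exp (((∑ i, d i ^ 2) / 2 - signedSum σ d ^ 2) / (8 * ∑ i, d i ^ 2))
      ≤ 2 ^ k * exp (-(1 / 32)) := by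
  have h2 := sum_signedSum_sq d
  have h4 := sum_signedSum_pow_four d
  have hd4 : 0 ≤ ∑ i, d i ^ 4 := by positivity
  generalize ∑ i, d i ^ 2 = S at hd h2 h4 ⊢
  calc ∑ σ, exp ((S / 2 - signedSum σ d ^ 2) / (8 * S))
      = exp (1 / 16) * ∑ σ, exp (-(signedSum σ d ^ 2 / (8 * S))) := by
        rw [Finset.mul_sum]
        congr! 1 with σ
        rw [← exp_add]
        congr 1
        field_simp
        ring
    _ ≤ exp (1 / 16) *
          ∑ σ, (1 - signedSum σ d ^ 2 / (8 * S) + (signedSum σ d ^ 2 / (8 * S)) ^ 2 / 2) := by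
        gcongr with σ
        exact exp_neg_le_one_sub_add_sq_div_two (by positivity)
    _ = exp (1 / 16) * (2 ^ k - (∑ σ, signedSum σ d ^ 2) / (8 * S)
          + (∑ σ, signedSum σ d ^ 4) / (128 * S ^ 2)) := by
        have hpt : ∀ y : ℝ, (y ^ 2 / (8 * S)) ^ 2 / 2 = y ^ 4 / (128 * S ^ 2) := fun y => by
          field_simp; ring
        simp only [hpt, Finset.sum_add_distrib, Finset.sum_sub_distrib, Finset.sum_div,
          sum_fun_bool_const, mul_one]
    _ ≤ exp (1 / 16) * (2 ^ k * exp (-(3 / 32))) := by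
        have hexp := one_sub_le_exp_neg (3 / 32 : ℝ)
        have hQ : 0 ≤ (∑ i, d i ^ 4) / (64 * S ^ 2) := by positivity
        have hval : 2 ^ k - 2 ^ k * S / (8 * S)
              + 2 ^ k * (3 * S ^ 2 - 2 * ∑ i, d i ^ 4) / (128 * S ^ 2)
            = 2 ^ k * (115 / 128 - (∑ i, d i ^ 4) / (64 * S ^ 2)) := by
          field_simp
          ring
        rw [h2, h4, hval]
        gcongr
        linarith
    _ = 2 ^ k * exp (-(1 / 32)) := by
        rw [mul_left_comm, ← exp_add]; norm_num

lemma card_filter_sum_nonneg_le {α : Type*} [Fintype α] (g : α → ℝ) (r : ℕ) :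
    (#{ω : Fin r → α | 0 ≤ ∑ l, g (ω l)} : ℝ) ≤ (∑ x, exp (g x)) ^ r := by
  rw [Fintype.sum_pow, Finset.natCast_card_filter]
  refine Finset.sum_le_sum fun ω _ => ?_
  rw [← exp_sum]
  split_ifs with h
  · exact one_le_exp h
  · exact (exp_pos _).le

def signMatrix {r k : ℕ} (ω : Fin r → Fin k → Bool) : Matrix (Fin r) (Fin k) ℝ :=
  Matrix.of fun l i => rademacher (ω l i)

lemma signMatrix_apply_eq_one_or {r k : ℕ} (ω : Fin r → Fin k → Bool) (l : Fin r) (i : Fin k) :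
    signMatrix ω l i = 1 ∨ signMatrix ω l i = -1 := by
  cases h : ω l i <;> simp [signMatrix, rademacher, h]

def ScalesSqNorm {r k : ℕ} (Q : Matrix (Fin r) (Fin k) ℝ) (d : Fin k → ℝ) : Prop :=
  (r : ℝ) / 2 * ∑ i, d i ^ 2 ≤ ∑ l, (Q.mulVec d) l ^ 2 ∧
    ∑ l, (Q.mulVec d) l ^ 2 ≤ 3 * (r : ℝ) / 2 * ∑ i, d i ^ 2

noncomputable instance {r k : ℕ} (Q : Matrix (Fin r) (Fin k) ℝ) (d : Fin k → ℝ) :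
    Decidable (ScalesSqNorm Q d) :=
  inferInstanceAs (Decidable (_ ∧ _))

lemma scalesSqNorm_zero {r k : ℕ} (Q : Matrix (Fin r) (Fin k) ℝ) : ScalesSqNorm Q 0 := by
  simp [ScalesSqNorm]

lemma card_not_scalesSqNorm_le {r k : ℕ} (d : Fin k → ℝ) :
    (#{ω : Fin r → Fin k → Bool | ¬ScalesSqNorm (signMatrix ω) d} : ℝ)
      ≤ 2 * (2 ^ k * exp (-(1 / 32))) ^ r := by
  obtain hd | hd := (Finset.sum_nonneg fun i _ => sq_nonneg (d i)).eq_or_lt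
  · obtain rfl : d = 0 := funext fun i =>
      pow_eq_zero_iff two_ne_zero |>.mp <| (Finset.sum_eq_zero_iff_of_nonneg
        fun j _ => sq_nonneg (d j)).mp hd.symm i (Finset.mem_univ i)
    simp only [scalesSqNorm_zero, not_true_eq_false, Finset.filter_false, Finset.card_empty,
      Nat.cast_zero]
    positivity
  set S := ∑ i, d i ^ 2
  let upper : (Fin k → Bool) → ℝ := fun σ => (signedSum σ d ^ 2 - 3 * S / 2) / (8 * S)
  let lower : (Fin k → Bool) → ℝ := fun σ => (S / 2 - signedSum σ d ^ 2) / (8 * S)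
  have himp : ∀ ω : Fin r → Fin k → Bool, ¬ScalesSqNorm (signMatrix ω) d →
      0 ≤ ∑ l, upper (ω l) ∨ 0 ≤ ∑ l, lower (ω l) := by
    intro ω h
    have hrow : ∀ l, (signMatrix ω).mulVec d l = signedSum (ω l) d := fun l => rfl
    simp only [ScalesSqNorm, hrow, not_and_or, not_le] at h
    simp only [upper, lower, ← Finset.sum_div, Finset.sum_sub_distrib, Finset.sum_const,
      Finset.card_univ, Fintype.card_fin, nsmul_eq_mul]
    rcases h with h | h
    · exact Or.inr (div_nonneg (by linarith) (by positivity))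
    · exact Or.inl (div_nonneg (by linarith) (by positivity))
  calc (#{ω : Fin r → Fin k → Bool | ¬ScalesSqNorm (signMatrix ω) d} : ℝ)
      ≤ #{ω : Fin r → Fin k → Bool | 0 ≤ ∑ l, upper (ω l)}
        + #{ω : Fin r → Fin k → Bool | 0 ≤ ∑ l, lower (ω l)} := by
        have hsub := Finset.monotone_filter_right Finset.univ fun ω _ => himp ω
        rw [Finset.filter_or] at hsub
        exact_mod_cast (Finset.card_le_card hsub).trans (Finset.card_union_le _ _)
    _ ≤ (2 ^ k * exp (-(1 / 32))) ^ r + (2 ^ k * exp (-(1 / 32))) ^ r := by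
        gcongr
        · exact (card_filter_sum_nonneg_le upper r).trans
            (pow_le_pow_left₀ (by positivity) (sum_exp_signedSum_sq_sub_le d hd) r)
        · exact (card_filter_sum_nonneg_le lower r).trans
            (pow_le_pow_left₀ (by positivity) (sum_exp_sub_signedSum_sq_le d hd) r)
    _ = 2 * (2 ^ k * exp (-(1 / 32))) ^ r := by ring

lemma exists_forall_of_sum_card_lt {Ω P : Type*} [Fintype Ω] [Fintype P] (good : P → Ω → Prop)
    [∀ p, DecidablePred (good p)] (h : ∑ p, (#{ω | ¬good p ω} : ℝ) < Fintype.card Ω) :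
    ∃ ω, ∀ p, good p ω := by
  classical
  by_contra! hbad
  have hcover : (Finset.univ : Finset Ω) ⊆ Finset.univ.biUnion fun p => {ω | ¬good p ω} :=
    fun ω _ => by simpa using hbad ω
  have := (Finset.card_le_card hcover).trans Finset.card_biUnion_le
  rw [Finset.card_univ] at this
  exact h.not_ge (by exact_mod_cast this)

lemma exists_signMatrix_forall_scalesSqNorm {ι : Type*} [Fintype ι] (k r : ℕ) (a : ι → Fin k → ℝ)
    (h : 2 * (Fintype.card ι : ℝ) ^ 2 < exp (r / 32)) :
    ∃ ω : Fin r → Fin k → Bool, ∀ u v, ScalesSqNorm (signMatrix ω) (a u - a v) := by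
  refine (exists_forall_of_sum_card_lt (fun (p : ι × ι) (ω : Fin r → Fin k → Bool) =>
    ScalesSqNorm (signMatrix ω) (a p.1 - a p.2)) ?_).imp fun ω hω u v => hω (u, v)
  calc ∑ p : ι × ι, (#{ω | ¬ScalesSqNorm (signMatrix ω) (a p.1 - a p.2)} : ℝ)
      ≤ ∑ _p : ι × ι, 2 * (2 ^ k * exp (-(1 / 32))) ^ r :=
        Finset.sum_le_sum fun p _ => card_not_scalesSqNorm_le _
    _ = 2 * (Fintype.card ι : ℝ) ^ 2 * exp (-(r / 32)) * (2 ^ k) ^ r := by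
        rw [Finset.sum_const, Finset.card_univ, Fintype.card_prod, mul_pow, ← exp_nat_mul]
        ring_nf
    _ < exp (r / 32) * exp (-(r / 32)) * (2 ^ k) ^ r := by gcongr
    _ = Fintype.card (Fin r → Fin k → Bool) := by
        rw [← exp_add, add_neg_cancel, exp_zero, one_mul]
        simp

lemma two_mul_sq_lt_exp_div {N r : ℕ} (hN : 2 ≤ N) (hr : 96 * log N < r) :
    2 * (N : ℝ) ^ 2 < exp (r / 32) := by
  have hN' : (2 : ℝ) ≤ N := by exact_mod_cast hN
  calc 2 * (N : ℝ) ^ 2 ≤ N ^ 3 := by nlinarith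
    _ = exp (3 * log N) := by
        rw [show (3 : ℝ) = (3 : ℕ) by norm_num, exp_nat_mul, exp_log (by positivity)]
    _ < exp (r / 32) := exp_lt_exp.2 (by linarith)

theorem exists_rademacher_JL_general
    (N k r : ℕ) (a : Fin N → Fin k → ℝ)
    (hr : 96 * Real.log N < (r : ℝ)) :
    ∃ Q : Matrix (Fin r) (Fin k) ℝ,
      (∀ i j, Q i j = 1 ∨ Q i j = -1) ∧
      ∀ u v : Fin N,
        (r : ℝ) / 2 * ∑ i, (a u i - a v i) ^ 2 ≤
            ∑ l, (Q.mulVec (a u) l - Q.mulVec (a v) l) ^ 2 ∧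
        ∑ l, (Q.mulVec (a u) l - Q.mulVec (a v) l) ^ 2 ≤
            3 * (r : ℝ) / 2 * ∑ i, (a u i - a v i) ^ 2 := by
  obtain hN | hN := le_or_gt N 1
  · have : Subsingleton (Fin N) := Fin.subsingleton_iff_le_one.2 hN
    refine ⟨signMatrix fun _ _ => true, signMatrix_apply_eq_one_or _, fun u v => ?_⟩
    simp [Subsingleton.elim u v]
  · obtain ⟨ω, hω⟩ := exists_signMatrix_forall_scalesSqNorm k r a
      (by simpa using two_mul_sq_lt_exp_div hN hr)
    refine ⟨signMatrix ω, signMatrix_apply_eq_one_or ω, fun u v => ?_⟩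
    simpa [ScalesSqNorm, Matrix.mulVec_sub] using hω u v

/-- Johnson–Lindenstrauss with Rademacher entries: for binary vectors
`a₁, …, a_N ∈ {0,1}^k` and `r > 96 log N`, there is `Q ∈ {−1,1}^{r×k}` preserving all
pairwise squared distances up to factors `r/2` and `3r/2`. -/
theorem exists_rademacher_JL
    (N k r : ℕ) (a : Fin N → Fin k → ℝ)
    (ha : ∀ u i, a u i = 0 ∨ a u i = 1)
    (hr : 96 * Real.log N < (r : ℝ)) :
    ∃ Q : Matrix (Fin r) (Fin k) ℝ,
      (∀ i j, Q i j = 1 ∨ Q i j = -1) ∧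
      ∀ u v : Fin N,
        (r : ℝ) / 2 * ∑ i, (a u i - a v i) ^ 2 ≤
            ∑ l, (Q.mulVec (a u) l - Q.mulVec (a v) l) ^ 2 ∧
        ∑ l, (Q.mulVec (a u) l - Q.mulVec (a v) l) ^ 2 ≤
            3 * (r : ℝ) / 2 * ∑ i, (a u i - a v i) ^ 2 :=
  exists_rademacher_JL_general N k r a hr
end

section
/- Let k ≥ 2 and 1 ≤ s ≤ k be integers. There exist absolute constants c₁, c₂, c₃ > 0 and a subset S₀ of {0,1}^k such that: (i) log|S₀| ≥ c₁ s log(ek/s); (ii) c₂ s ≤ ‖a‖₀ ≤ s for all a ∈ S₀, with ‖a‖₀ = s for all a ∈ S₀ whenever s ≤ k/2; (iii) ‖a − b‖₂² ≥ c₃ s for all distinct a, b ∈ S₀. -/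
/-
Gilbert–Varshamov argument in the slice of `m`-subsets of `Fin k`, where `m = min s ⌊k/2⌋`.
A maximal family of `m`-sets with pairwise intersections smaller than `m - r` is dominating,
so the balls `{A | m - r ≤ #(A ∩ B)}` around its members cover the slice; each ball has at most
`(m choose r) (k choose r)` elements, since such an `A` is a union of an `(m - r)`-subset of
`B` and an `r`-set. With `r = ⌊m/64⌋`, the bounds `(k/m)^m ≤ (k choose m)` and
`(n choose r) ≤ (en/r)^r` leave at least `exp(m log(k/m) / 2)` sets, pairwise at Hamming distance
at least `2(r + 1) > m/32`. Since `s ≤ 3m` and `k/m ≥ 2`, this gives the claim with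
`c₁ = 1/18`, `c₂ = 1/3`, `c₃ = 1/96`.
-/

open Finset Real

namespace Nat

theorem div_pow_le_choose {n r : ℕ} (hrn : r ≤ n) : ((n : ℝ) / r) ^ r ≤ n.choose r := by
  rcases Nat.eq_zero_or_pos r with rfl | hr
  · simp
  have key : n ^ r * r ! ≤ r ^ r * n.descFactorial r := by
    rw [← descFactorial_self, descFactorial_eq_prod_range, descFactorial_eq_prod_range,
      ← card_range r, ← prod_const, ← prod_const, card_range, ← prod_mul_distrib,
      ← prod_mul_distrib]
    refine prod_le_prod' fun i hi => ?_
    have hir : i < r := mem_range.mp hi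
    rw [Nat.mul_sub, Nat.mul_sub, mul_comm n r]
    exact Nat.sub_le_sub_left (Nat.mul_le_mul_right i hrn) _
  rw [descFactorial_eq_factorial_mul_choose, ← mul_assoc, mul_comm (r ^ r), mul_assoc,
    mul_comm (r !)] at key
  have key' : (n : ℝ) ^ r ≤ r ^ r * n.choose r := by
    exact_mod_cast Nat.le_of_mul_le_mul_right key (factorial_pos r)
  rwa [div_pow, div_le_iff₀' (by positivity)]

theorem choose_le_exp_mul_div_pow (n r : ℕ) : (n.choose r : ℝ) ≤ (exp 1 * n / r) ^ r := by
  rcases Nat.eq_zero_or_pos r with rfl | hr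
  · simp
  have hfac : (r : ℝ) ^ r / r ! ≤ exp r := Real.pow_div_factorial_le_exp _ (Nat.cast_nonneg r) r
  calc (n.choose r : ℝ) ≤ n ^ r / r ! := choose_le_pow_div r n
    _ = (r : ℝ) ^ r / r ! * (n / r) ^ r := by rw [div_pow]; field_simp
    _ ≤ exp r * (n / r) ^ r := by gcongr
    _ = (exp 1 * n / r) ^ r := by rw [← exp_one_pow, ← mul_pow, mul_div_assoc]

end Nat

theorem mul_log_div_le_log_choose {n r : ℕ} (hrn : r ≤ n) :
    r * log (n / r) ≤ log (n.choose r) := by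
  rcases Nat.eq_zero_or_pos r with rfl | hr
  · simp
  have hn : (0 : ℝ) < n := by exact_mod_cast hr.trans_le hrn
  have h := log_le_log (by positivity) (Nat.div_pow_le_choose hrn)
  rwa [log_pow] at h

theorem log_choose_le_mul_one_add_log_div {n r : ℕ} (hrn : r ≤ n) :
    log (n.choose r) ≤ r * (1 + log (n / r)) := by
  rcases Nat.eq_zero_or_pos r with rfl | hr
  · simp
  have hn : (0 : ℝ) < n := by exact_mod_cast hr.trans_le hrn
  calc log (n.choose r) ≤ log ((exp 1 * n / r) ^ r) :=
        log_le_log (by exact_mod_cast Nat.choose_pos hrn) (Nat.choose_le_exp_mul_div_pow n r)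
    _ = r * (1 + log (n / r)) := by
        rw [log_pow, mul_div_assoc, log_mul (exp_ne_zero 1) (by positivity), log_exp]

theorem Finset.exists_pairwise_not_rel_dominating {α : Type*} (W : Finset α)
    (R : α → α → Prop) (hrefl : ∀ a ∈ W, R a a) (hsymm : ∀ a b, R a b → R b a) :
    ∃ P ⊆ W, (P : Set α).Pairwise (fun a b => ¬ R a b) ∧ ∀ a ∈ W, ∃ b ∈ P, R b a := by
  classical
  obtain ⟨P, hP, hmax⟩ := (W.powerset.filter fun P : Finset α =>
    (P : Set α).Pairwise fun a b => ¬ R a b).exists_maximal ⟨∅, by simp⟩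
  simp only [mem_filter, mem_powerset] at hP hmax
  refine ⟨P, hP.1, hP.2, fun a ha => ?_⟩
  by_contra! hfar
  have hsep : (insert a P : Set α).Pairwise fun a b => ¬ R a b :=
    hP.2.insert fun b hb _ => ⟨fun h => hfar b hb (hsymm _ _ h), hfar b hb⟩
  have haP : a ∈ P := hmax ⟨insert_subset ha hP.1, by rwa [coe_insert]⟩ (subset_insert a P)
    (mem_insert_self a P)
  exact hfar a haP (hrefl a ha)

theorem Finset.exists_pairwise_not_rel_card_le_card_mul {α : Type*} [DecidableEq α]
    (W : Finset α) (R : α → α → Prop) [DecidableRel R]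
    (hrefl : ∀ a ∈ W, R a a) (hsymm : ∀ a b, R a b → R b a) {M : ℕ}
    (hball : ∀ b ∈ W, #{a ∈ W | R b a} ≤ M) :
    ∃ P ⊆ W, (P : Set α).Pairwise (fun a b => ¬ R a b) ∧ #W ≤ #P * M := by
  obtain ⟨P, hPW, hsep, hdom⟩ := W.exists_pairwise_not_rel_dominating R hrefl hsymm
  refine ⟨P, hPW, hsep, ?_⟩
  calc #W ≤ #(P.biUnion fun b => {a ∈ W | R b a}) := card_le_card fun a ha => by
        obtain ⟨b, hb, hba⟩ := hdom a ha
        exact mem_biUnion.mpr ⟨b, hb, mem_filter.mpr ⟨ha, hba⟩⟩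
    _ ≤ #P * M := card_biUnion_le_card_mul _ _ _ fun b hb => hball b (hPW hb)

section Slice

variable {α : Type*} [DecidableEq α]

theorem decide_mem_injective :
    Function.Injective fun (A : Finset α) (i : α) => decide (i ∈ A) :=
  fun A B h => by ext i; simpa using congrFun h i

variable [Fintype α]

theorem card_filter_powersetCard_sub_le_card_inter_le {m r : ℕ} (hrm : r ≤ m) {B : Finset α}
    (hB : #B = m) :
    #{A ∈ powersetCard m (univ : Finset α) | m - r ≤ #(B ∩ A)} ≤
      m.choose r * (Fintype.card α).choose r := by
  have hsub : {A ∈ powersetCard m (univ : Finset α) | m - r ≤ #(B ∩ A)} ⊆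
      (powersetCard (m - r) B ×ˢ powersetCard r univ).image fun DE => DE.1 ∪ DE.2 := by
    intro A hA
    obtain ⟨hAW, hBA⟩ := mem_filter.mp hA
    have hAm : #A = m := (mem_powersetCard.mp hAW).2
    obtain ⟨D, hDBA, hD⟩ := exists_subset_card_eq hBA
    have hDA : D ⊆ A := hDBA.trans inter_subset_right
    refine mem_image.mpr ⟨(D, A \ D), ?_, union_sdiff_of_subset hDA⟩
    simp only [mem_product, mem_powersetCard, subset_univ, true_and, card_sdiff_of_subset hDA]
    exact ⟨⟨hDBA.trans inter_subset_left, hD⟩, by omega⟩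
  calc _ ≤ _ := card_le_card hsub
    _ ≤ _ := card_image_le
    _ = _ := by rw [card_product, card_powersetCard, card_powersetCard, hB, card_univ,
      Nat.choose_symm hrm]

theorem exists_powersetCard_packing {m r : ℕ} (hrm : r ≤ m) :
    ∃ P ⊆ powersetCard m (univ : Finset α), (P : Set (Finset α)).Pairwise
      (fun A B => #(A ∩ B) < m - r) ∧
      (Fintype.card α).choose m ≤ #P * (m.choose r * (Fintype.card α).choose r) := by
  obtain ⟨P, hPW, hsep, hcard⟩ :=
    (powersetCard m (univ : Finset α)).exists_pairwise_not_rel_card_le_card_mul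
      (fun A B => m - r ≤ #(A ∩ B))
      (fun A hA => by rw [inter_self, (mem_powersetCard.mp hA).2]; omega)
      (fun A B h => by rwa [inter_comm])
      (fun B hB => card_filter_powersetCard_sub_le_card_inter_le hrm (mem_powersetCard.mp hB).2)
  refine ⟨P, hPW, hsep.imp fun _ _ => Nat.lt_of_not_le, ?_⟩
  rwa [card_powersetCard, card_univ] at hcard

theorem card_filter_decide_mem (A : Finset α) : #{i | decide (i ∈ A) = true} = #A := by
  simp

theorem card_filter_decide_mem_ne_add_two_mul_card_inter (A B : Finset α) :
    #{i | decide (i ∈ A) ≠ decide (i ∈ B)} + 2 * #(A ∩ B) = #A + #B := by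
  have h : ({i | decide (i ∈ A) ≠ decide (i ∈ B)} : Finset α) = A \ B ∪ B \ A := by
    ext i
    by_cases hA : i ∈ A <;> by_cases hB : i ∈ B <;> simp [hA, hB]
  rw [h, card_union_of_disjoint disjoint_sdiff_sdiff, ← card_sdiff_add_card_inter A B,
    ← card_sdiff_add_card_inter B A, inter_comm B A]
  ring

end Slice

theorem log_two_le_log_div {k m : ℕ} (hm : 0 < m) (hmk : 2 * m ≤ k) :
    log 2 ≤ log ((k : ℝ) / m) := by
  have hm' : (0 : ℝ) < m := by exact_mod_cast hm
  refine log_le_log two_pos ?_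
  rw [le_div_iff₀ hm']
  exact_mod_cast hmk

theorem log_choose_mul_choose_le {k m r : ℕ} (hm : 0 < m) (hrm : 64 * r ≤ m)
    (hmr : m < 64 * (r + 1)) (hmk : 2 * m ≤ k) :
    log ((m.choose r : ℝ) * k.choose r) ≤ m * log ((k : ℝ) / m) / 2 := by
  set L := log ((k : ℝ) / m)
  have hL : log 2 ≤ L := log_two_le_log_div hm hmk
  have hlog2 := log_two_gt_d9
  rcases Nat.eq_zero_or_pos r with rfl | hr
  · simp only [Nat.choose_zero_right, Nat.cast_one, mul_one, log_one]
    have : (0 : ℝ) ≤ L := by linarith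
    positivity
  have hm' : (0 : ℝ) < m := by exact_mod_cast hm
  have hr' : (0 : ℝ) < r := by exact_mod_cast hr
  have hrk : r ≤ k := by omega
  have hk' : (0 : ℝ) < k := by exact_mod_cast (by omega : 0 < k)
  have hlog_mr : log ((m : ℝ) / r) ≤ 7 * log 2 := by
    have h128 : (m : ℝ) / r ≤ 2 ^ 7 := by
      rw [div_le_iff₀ hr']
      exact_mod_cast (by omega : m ≤ 2 ^ 7 * r)
    calc log ((m : ℝ) / r) ≤ log (2 ^ 7) := log_le_log (by positivity) h128
      _ = 7 * log 2 := by rw [log_pow]; norm_num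
  have hlog_kr : log ((k : ℝ) / r) = L + log ((m : ℝ) / r) := by
    rw [← log_mul (by positivity) (by positivity), div_mul_div_cancel₀ hm'.ne']
  have hchoose_m := log_choose_le_mul_one_add_log_div (by omega : r ≤ m)
  have hchoose_k := log_choose_le_mul_one_add_log_div hrk
  rw [hlog_kr] at hchoose_k
  have hr64 : (r : ℝ) ≤ m / 64 := by
    rw [le_div_iff₀ (by norm_num)]
    exact_mod_cast (by omega : r * 64 ≤ m)
  calc log ((m.choose r : ℝ) * k.choose r)
      = log (m.choose r) + log (k.choose r) :=
        log_mul (by exact_mod_cast (Nat.choose_pos (by omega)).ne')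
          (by exact_mod_cast (Nat.choose_pos hrk).ne')
    _ ≤ r * (2 + 2 * log ((m : ℝ) / r) + L) := by linarith
    _ ≤ r * (19 * L) := by gcongr; linarith
    _ ≤ (m / 64) * (19 * L) := by gcongr; linarith
    _ ≤ m * L / 2 := by nlinarith

theorem mul_log_div_le_two_mul_log {k m r P : ℕ} (hm : 0 < m) (hrm : 64 * r ≤ m)
    (hmr : m < 64 * (r + 1)) (hmk : 2 * m ≤ k)
    (hP : k.choose m ≤ P * (m.choose r * k.choose r)) :
    m * log ((k : ℝ) / m) ≤ 2 * log P := by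
  have hchoose : 0 < k.choose m := Nat.choose_pos (by omega)
  obtain ⟨hP0, hball0⟩ := Nat.mul_ne_zero_iff.mp (hchoose.trans_le hP).ne'
  have hlog : log (k.choose m) ≤ log P + log ((m.choose r : ℝ) * k.choose r) := by
    rw [← log_mul (by exact_mod_cast hP0) (by exact_mod_cast hball0)]
    exact log_le_log (by exact_mod_cast hchoose) (by exact_mod_cast hP)
  linarith [mul_log_div_le_log_choose (by omega : m ≤ k), log_choose_mul_choose_le hm hrm hmr hmk]

theorem mul_log_exp_mul_div_le {k m s : ℕ} (hm : 0 < m) (hms : m ≤ s) (hsm : s ≤ 3 * m)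
    (hmk : 2 * m ≤ k) (hsk : s ≤ k) :
    s * log (exp 1 * k / s) ≤ 9 * (m * log ((k : ℝ) / m)) := by
  have hL := log_two_le_log_div hm hmk
  have hlog2 := log_two_gt_d9
  have hm' : (0 : ℝ) < m := by exact_mod_cast hm
  have hs' : (0 : ℝ) < s := by exact_mod_cast hm.trans_le hms
  have hks : 1 ≤ (k : ℝ) / s := by rw [one_le_div hs']; exact_mod_cast hsk
  have hlog_ks : log ((k : ℝ) / s) ≤ log ((k : ℝ) / m) := log_le_log (by linarith)
    (div_le_div_of_nonneg_left (by positivity) hm' (by exact_mod_cast hms))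
  calc s * log (exp 1 * k / s) = s * (1 + log ((k : ℝ) / s)) := by
        rw [mul_div_assoc, log_mul (exp_ne_zero 1) (by positivity), log_exp]
    _ ≤ (3 * m) * (3 * log ((k : ℝ) / m)) := by
        gcongr
        · linarith [log_nonneg hks]
        · exact_mod_cast hsm
        · linarith
    _ = 9 * (m * log ((k : ℝ) / m)) := by ring

/-- Sparse Varshamov–Gilbert type bound: there exist absolute constants
`c₁, c₂, c₃ > 0` such that for all integers `2 ≤ k` and `1 ≤ s ≤ k` there is a set
`S₀ ⊆ {0,1}^k` with `log|S₀| ≥ c₁ s log(ek/s)`, sparsity `c₂ s ≤ ‖a‖₀ ≤ s` (with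
`‖a‖₀ = s` whenever `s ≤ k/2`), and pairwise squared distances at least `c₃ s`. -/
theorem exists_sparse_varshamov_gilbert :
    ∃ c₁ c₂ c₃ : ℝ, 0 < c₁ ∧ 0 < c₂ ∧ 0 < c₃ ∧
      ∀ k s : ℕ, 2 ≤ k → 1 ≤ s → s ≤ k →
        ∃ S₀ : Finset (Fin k → Bool),
          (c₁ * s * Real.log (Real.exp 1 * k / s) ≤ Real.log S₀.card) ∧
          (∀ a ∈ S₀,
            c₂ * s ≤ ((Finset.univ.filter fun i => a i = true).card : ℝ) ∧
            (Finset.univ.filter fun i => a i = true).card ≤ s) ∧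
          ((s : ℝ) ≤ k / 2 → ∀ a ∈ S₀,
            (Finset.univ.filter fun i => a i = true).card = s) ∧
          (∀ a ∈ S₀, ∀ b ∈ S₀, a ≠ b →
            c₃ * s ≤ ((Finset.univ.filter fun i => a i ≠ b i).card : ℝ)) := by
  refine ⟨1 / 18, 1 / 3, 1 / 96, by norm_num, by norm_num, by norm_num, fun k s hk hs hsk => ?_⟩
  set m := min s (k / 2)
  have hm : 0 < m := by omega
  have hmk : 2 * m ≤ k := by omega
  have hms : m ≤ s := min_le_left _ _
  have hsm : s ≤ 3 * m := by omega
  obtain ⟨P, hPW, hPsep, hPcard⟩ :=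
    exists_powersetCard_packing (α := Fin k) (m := m) (r := m / 64) (Nat.div_le_self _ _)
  rw [Fintype.card_fin] at hPcard
  have hlogP := mul_log_div_le_two_mul_log hm (Nat.mul_div_le m 64) (by omega) hmk hPcard
  have hsize : ∀ A ∈ P, #A = m := fun A hA => (mem_powersetCard.mp (hPW hA)).2
  refine ⟨P.image fun A i => decide (i ∈ A), ?_, ?_, ?_, ?_⟩
  · rw [card_image_of_injective _ decide_mem_injective]
    linarith [mul_log_exp_mul_div_le hm hms hsm hmk hsk]
  · simp only [forall_mem_image]
    intro A hA
    rw [card_filter_decide_mem, hsize A hA]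
    exact ⟨by rw [one_div, inv_mul_le_iff₀ (by norm_num)]; exact_mod_cast hsm, hms⟩
  · simp only [forall_mem_image]
    intro hs_half A hA
    have : 2 * s ≤ k := by
      rw [le_div_iff₀ two_pos] at hs_half
      exact_mod_cast (by linarith : 2 * (s : ℝ) ≤ k)
    rw [card_filter_decide_mem, hsize A hA]
    omega
  · simp only [forall_mem_image]
    intro A hA B hB hne
    have hAB := hPsep hA hB (by rintro rfl; exact hne rfl)
    have hdist := card_filter_decide_mem_ne_add_two_mul_card_inter A B
    rw [hsize A hA, hsize B hB] at hdist
    rw [one_div, inv_mul_le_iff₀ (by norm_num)]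
    exact_mod_cast (by omega : s ≤ 96 * #{i | decide (i ∈ A) ≠ decide (i ∈ B)})
end

section
/- Let θ be an n×m real matrix of rank at most 2, and let ϑ be any n×m real matrix. Let ϑ₂ be a matrix of rank at most 2 closest to ϑ in Frobenius norm (i.e., best rank-2 approximation). Then ‖θ − ϑ₂‖₂² ≤ 16 ‖θ − ϑ‖², where ‖·‖₂ is the Frobenius norm and ‖·‖ the spectral norm. -/
open scoped BigOperators

/-- Frobenius norm of a matrix. -/
noncomputable def frobNorm {n m : ℕ} (A : Matrix (Fin n) (Fin m) ℝ) : ℝ :=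
  Real.sqrt (∑ i, ∑ j, (A i j) ^ 2)

/-- Spectral (operator) norm of a matrix. -/
noncomputable def specNorm {n m : ℕ} (A : Matrix (Fin n) (Fin m) ℝ) : ℝ :=
  ⨆ x : {x : Fin m → ℝ // ∑ j, (x j) ^ 2 ≤ 1}, Real.sqrt (∑ i, (A.mulVec x.1 i) ^ 2)

/-!
Write `rᵢ` for the rows of `ϑ` and call `∑ᵢ ‖P_W rᵢ‖²` the energy captured by a subspace `W`.
A Frobenius-best rank-`k` approximation `ϑ₂` projects the rows of `ϑ` onto its own row space
`W₀`, which captures the most energy among subspaces of dimension `≤ k`. This makes the residual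
small in operator norm (spectral Eckart–Young): for a unit `y ⟂ W₀` such that `W₀ ⊕ ℝy` has
dimension `k + 1`, this space meets the kernel of the rank-`k` matrix `θ` in a unit vector `v`,
and dropping `v` rather than `y` shows `∑ᵢ ⟪rᵢ, y⟫² ≤ ∑ᵢ ⟪rᵢ, v⟫² = ‖(ϑ - θ) v‖² ≤ ‖ϑ - θ‖²`;
thus `‖ϑ - ϑ₂‖ ≤ ‖ϑ - θ‖`. Hence `‖θ - ϑ₂‖ ≤ 2 ‖θ - ϑ‖`, and as `θ - ϑ₂` has rank at most `4`,
its squared Frobenius norm is at most `4 ‖θ - ϑ₂‖²`.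
-/

open Submodule Module RealInnerProductSpace

section CapturedEnergy

variable {E : Type*} [NormedAddCommGroup E] [InnerProductSpace ℝ E] {ι : Type*} [Fintype ι]

lemma sum_inner_sq_le_of_forall_norm_eq_one {r : ι → E} {S : Submodule ℝ E} {s : ℝ}
    (h : ∀ y ∈ S, ‖y‖ = 1 → ∑ i, ⟪r i, y⟫ ^ 2 ≤ s ^ 2) {y : E} (hy : y ∈ S) :
    ∑ i, ⟪r i, y⟫ ^ 2 ≤ s ^ 2 * ‖y‖ ^ 2 := by
  rcases eq_or_ne y 0 with rfl | hy0
  · simp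
  have hscale := h _ (smul_mem _ ‖y‖⁻¹ hy) (norm_smul_inv_norm hy0)
  simp_rw [real_inner_smul_right, mul_pow, ← Finset.mul_sum] at hscale
  have hpos : 0 < ‖y‖ ^ 2 := by positivity
  rw [inv_pow, inv_mul_le_iff₀ hpos] at hscale
  linarith

variable [FiniteDimensional ℝ E] (r : ι → E)

noncomputable def capturedEnergy (W : Submodule ℝ E) : ℝ :=
  ∑ i, ‖W.starProjection (r i)‖ ^ 2

lemma norm_starProjection_sq_eq_sum_inner_sq {κ : Type*} [Fintype κ] (W : Submodule ℝ E)
    (b : OrthonormalBasis κ ℝ W) (x : E) :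
    ‖W.starProjection x‖ ^ 2 = ∑ k, ⟪(b k : E), x⟫ ^ 2 := by
  change ‖(W.orthogonalProjectionOnto x : E)‖ ^ 2 = _
  rw [norm_coe, ← b.sum_sq_inner_right (W.orthogonalProjectionOnto x)]
  simp_rw [inner_orthogonalProjectionOnto_eq_of_mem_left]

lemma capturedEnergy_le_finrank_mul {s : ℝ} (hs : ∀ x, ∑ i, ⟪r i, x⟫ ^ 2 ≤ s ^ 2 * ‖x‖ ^ 2)
    (W : Submodule ℝ E) : capturedEnergy r W ≤ finrank ℝ W * s ^ 2 := by
  let b := stdOrthonormalBasis ℝ W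
  calc capturedEnergy r W = ∑ k, ∑ i, ⟪r i, (b k : E)⟫ ^ 2 := by
        simp_rw [capturedEnergy, norm_starProjection_sq_eq_sum_inner_sq W b, real_inner_comm]
        exact Finset.sum_comm
    _ ≤ ∑ _k, s ^ 2 := Finset.sum_le_sum fun k _ => by
        have hb : ‖(b k : E)‖ = 1 := b.orthonormal.1 k
        simpa [hb] using hs (b k)
    _ = finrank ℝ W * s ^ 2 := by simp

lemma capturedEnergy_eq_sum_norm_sq {W : Submodule ℝ E} (h : ∀ i, r i ∈ W) :
    capturedEnergy r W = ∑ i, ‖r i‖ ^ 2 := by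
  simp only [capturedEnergy, starProjection_eq_self_iff.2 (h _)]

lemma starProjection_sup_span_singleton {W : Submodule ℝ E} {y : E} (hy : y ∈ Wᗮ)
    (hy1 : ‖y‖ = 1) (x : E) :
    (W ⊔ ℝ ∙ y).starProjection x = W.starProjection x + ⟪y, x⟫ • y := by
  have hyP : ⟪y, W.starProjection x⟫ = 0 :=
    (mem_orthogonal' W y).1 hy _ (W.starProjection_apply_mem x)
  refine eq_starProjection_of_mem_orthogonal
    (add_mem (mem_sup_left (W.starProjection_apply_mem x))
      (mem_sup_right (smul_mem _ _ (mem_span_singleton_self y)))) ?_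
  rw [← inf_orthogonal, mem_inf, mem_orthogonal_singleton_iff_inner_right, sub_add_eq_sub_sub]
  refine ⟨sub_mem (sub_starProjection_mem_orthogonal x) (smul_mem _ _ hy), ?_⟩
  rw [inner_sub_right, inner_sub_right, hyP, real_inner_smul_right, real_inner_self_eq_norm_sq,
    hy1]
  ring

lemma capturedEnergy_sup_span_singleton {W : Submodule ℝ E} {y : E} (hy : y ∈ Wᗮ)
    (hy1 : ‖y‖ = 1) :
    capturedEnergy r (W ⊔ ℝ ∙ y) = capturedEnergy r W + ∑ i, ⟪r i, y⟫ ^ 2 := by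
  simp_rw [capturedEnergy, starProjection_sup_span_singleton hy hy1, ← Finset.sum_add_distrib]
  refine Finset.sum_congr rfl fun i _ => ?_
  have hyP : ⟪W.starProjection (r i), y⟫ = 0 :=
    (mem_orthogonal W y).1 hy _ (W.starProjection_apply_mem _)
  rw [norm_add_sq_real, real_inner_smul_right, hyP, norm_smul, hy1, Real.norm_eq_abs, mul_one,
    sq_abs, real_inner_comm]
  ring

lemma norm_sub_sq_eq_of_mem {W : Submodule ℝ E} {x c : E} (hc : c ∈ W) :
    ‖x - c‖ ^ 2 = ‖x‖ ^ 2 - ‖W.starProjection x‖ ^ 2 + ‖W.starProjection x - c‖ ^ 2 := by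
  have horth : ⟪x - W.starProjection x, W.starProjection x - c⟫ = 0 :=
    (mem_orthogonal' W _).1 (sub_starProjection_mem_orthogonal x) _
      (sub_mem (W.starProjection_apply_mem x) hc)
  have hx : ‖x‖ ^ 2 = ‖W.starProjection x‖ ^ 2 + ‖x - W.starProjection x‖ ^ 2 := by
    rw [← W.starProjection_orthogonal_val x]
    exact W.norm_sq_eq_add_norm_sq_starProjection x
  rw [← sub_add_sub_cancel x (W.starProjection x) c, norm_add_sq_real, horth]
  linarith

lemma exists_mem_inf_norm_eq_one {U K : Submodule ℝ E}
    (h : finrank ℝ E < finrank ℝ U + finrank ℝ K) : ∃ v ∈ U ⊓ K, ‖v‖ = 1 := by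
  have hpos : 0 < finrank ℝ (U ⊓ K : Submodule ℝ E) := by
    have := finrank_sup_add_finrank_inf_eq U K
    have := finrank_le (U ⊔ K)
    omega
  obtain ⟨⟨v, hv⟩, hv0⟩ := finrank_pos_iff_exists_ne_zero.1 hpos
  have hv0 : v ≠ 0 := fun h => hv0 (Subtype.ext h)
  exact ⟨‖v‖⁻¹ • v, smul_mem _ _ hv, norm_smul_inv_norm hv0⟩

lemma sum_inner_sq_le_of_forall_capturedEnergy_le {k : ℕ} {W₀ K : Submodule ℝ E} {s : ℝ}
    (hW₀ : finrank ℝ W₀ ≤ k)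
    (hmax : ∀ W : Submodule ℝ E, finrank ℝ W ≤ k → capturedEnergy r W ≤ capturedEnergy r W₀)
    (hK : finrank ℝ E ≤ finrank ℝ K + k)
    (hs : ∀ v ∈ K, ∑ i, ⟪r i, v⟫ ^ 2 ≤ s ^ 2 * ‖v‖ ^ 2)
    {y : E} (hy : y ∈ W₀ᗮ) (hy1 : ‖y‖ = 1) :
    ∑ i, ⟪r i, y⟫ ^ 2 ≤ s ^ 2 := by
  set U := W₀ ⊔ ℝ ∙ y
  have hU := capturedEnergy_sup_span_singleton r hy hy1
  rcases le_or_gt (finrank ℝ U) k with hUk | hUk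
  · nlinarith [hmax U hUk]
  -- Now `U` has dimension `k + 1`: trading `y` for a unit vector `v ∈ U ⊓ K` costs at most `s ^ 2`.
  have hUdim : finrank ℝ U ≤ finrank ℝ W₀ + 1 :=
    (finrank_add_le_finrank_add_finrank _ _).trans
      (by rw [finrank_span_singleton (norm_ne_zero_iff.1 (by simp [hy1]))])
  obtain ⟨v, hv, hv1⟩ := exists_mem_inf_norm_eq_one (U := U) (K := K) (by omega)
  rw [mem_inf] at hv
  set W := (ℝ ∙ v)ᗮ ⊓ U
  have hUW : U = W ⊔ ℝ ∙ v := by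
    rw [sup_comm]
    exact (sup_orthogonal_inf_of_hasOrthogonalProjection
      (span_singleton_le_iff_mem _ _ |>.2 hv.1)).symm
  have hvW : v ∈ Wᗮ :=
    orthogonal_le inf_le_left (le_orthogonal_orthogonal _ (mem_span_singleton_self v))
  have hWdim : finrank ℝ W ≤ k := by
    have : finrank ℝ (ℝ ∙ v) + finrank ℝ W = finrank ℝ U :=
      finrank_add_inf_finrank_orthogonal (span_singleton_le_iff_mem _ _ |>.2 hv.1)
    rw [finrank_span_singleton (norm_ne_zero_iff.1 (by simp [hv1]))] at this
    omega
  have hsplit := capturedEnergy_sup_span_singleton r hvW hv1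
  rw [← hUW] at hsplit
  have hv := hs v hv.2
  rw [hv1] at hv
  linarith [hmax W hWdim]

lemma sum_inner_sub_starProjection_sq_le {k : ℕ} {W₀ K : Submodule ℝ E} {s : ℝ}
    (hW₀ : finrank ℝ W₀ ≤ k)
    (hmax : ∀ W : Submodule ℝ E, finrank ℝ W ≤ k → capturedEnergy r W ≤ capturedEnergy r W₀)
    (hK : finrank ℝ E ≤ finrank ℝ K + k)
    (hs : ∀ v ∈ K, ∑ i, ⟪r i, v⟫ ^ 2 ≤ s ^ 2 * ‖v‖ ^ 2) (x : E) :
    ∑ i, ⟪r i - W₀.starProjection (r i), x⟫ ^ 2 ≤ s ^ 2 * ‖x‖ ^ 2 := by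
  have hres : ∀ i, ⟪r i - W₀.starProjection (r i), x⟫ = ⟪r i, x - W₀.starProjection x⟫ :=
    fun i => by rw [inner_sub_left, inner_sub_right, inner_starProjection_left_eq_right]
  simp_rw [hres]
  calc ∑ i, ⟪r i, x - W₀.starProjection x⟫ ^ 2 ≤ s ^ 2 * ‖x - W₀.starProjection x‖ ^ 2 :=
        sum_inner_sq_le_of_forall_norm_eq_one
          (fun y hy hy1 => sum_inner_sq_le_of_forall_capturedEnergy_le r hW₀ hmax hK hs hy hy1)
          (sub_starProjection_mem_orthogonal x)
    _ ≤ s ^ 2 * ‖x‖ ^ 2 := by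
        gcongr
        rw [← W₀.starProjection_orthogonal_val]
        exact W₀ᗮ.norm_starProjection_apply_le x

end CapturedEnergy

open scoped Matrix.Norms.L2Operator
open Matrix

section EuclideanRow

variable {n m : ℕ}

def euclideanRow (A : Matrix (Fin n) (Fin m) ℝ) (i : Fin n) : EuclideanSpace ℝ (Fin m) :=
  WithLp.toLp 2 (A i)

lemma euclideanRow_sub (A B : Matrix (Fin n) (Fin m) ℝ) :
    euclideanRow (A - B) = euclideanRow A - euclideanRow B := rfl

lemma inner_euclideanRow (A : Matrix (Fin n) (Fin m) ℝ) (i : Fin n)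
    (x : EuclideanSpace ℝ (Fin m)) :
    ⟪euclideanRow A i, x⟫ = (A *ᵥ x.ofLp) i := by
  simp [euclideanRow, EuclideanSpace.inner_eq_star_dotProduct, mulVec, dotProduct_comm]

lemma norm_toLpLin_apply_sq (A : Matrix (Fin n) (Fin m) ℝ) (x : EuclideanSpace ℝ (Fin m)) :
    ‖toLpLin 2 2 A x‖ ^ 2 = ∑ i, ⟪euclideanRow A i, x⟫ ^ 2 := by
  simp [EuclideanSpace.norm_sq_eq, inner_euclideanRow]

lemma l2_opNorm_le_iff {A : Matrix (Fin n) (Fin m) ℝ} {s : ℝ} (hs : 0 ≤ s) :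
    ‖A‖ ≤ s ↔ ∀ x, ∑ i, ⟪euclideanRow A i, x⟫ ^ 2 ≤ s ^ 2 * ‖x‖ ^ 2 := by
  rw [l2_opNorm_def, ContinuousLinearMap.opNorm_le_iff hs]
  refine forall_congr' fun x => ?_
  rw [← norm_toLpLin_apply_sq, ← mul_pow, pow_le_pow_iff_left₀ (norm_nonneg _) (by positivity)
    two_ne_zero]
  rfl

def rowSpace (A : Matrix (Fin n) (Fin m) ℝ) : Submodule ℝ (EuclideanSpace ℝ (Fin m)) :=
  span ℝ (Set.range (euclideanRow A))

lemma rank_eq_finrank_rowSpace (A : Matrix (Fin n) (Fin m) ℝ) :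
    A.rank = finrank ℝ (rowSpace A) := by
  rw [rank_eq_finrank_span_row, ← (WithLp.linearEquiv 2 ℝ (Fin m → ℝ)).symm.finrank_map_eq,
    Submodule.map_span, ← Set.range_comp]
  rfl

lemma rank_le_finrank_of_forall_euclideanRow_mem {A : Matrix (Fin n) (Fin m) ℝ}
    {W : Submodule ℝ (EuclideanSpace ℝ (Fin m))} (h : ∀ i, euclideanRow A i ∈ W) :
    A.rank ≤ finrank ℝ W := by
  rw [rank_eq_finrank_rowSpace]
  exact finrank_mono (span_le.2 (Set.range_subset_iff.2 h))

lemma rank_sub_le (A B : Matrix (Fin n) (Fin m) ℝ) : (A - B).rank ≤ A.rank + B.rank := by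
  rw [rank_eq_finrank_rowSpace A, rank_eq_finrank_rowSpace B]
  refine (rank_le_finrank_of_forall_euclideanRow_mem fun i => ?_).trans
    (finrank_add_le_finrank_add_finrank _ _)
  rw [euclideanRow_sub]
  exact sub_mem (mem_sup_left (subset_span ⟨i, rfl⟩)) (mem_sup_right (subset_span ⟨i, rfl⟩))

lemma finrank_ker_toLpLin_add_rank (A : Matrix (Fin n) (Fin m) ℝ) :
    finrank ℝ (LinearMap.ker (toLpLin 2 2 A)) + A.rank = m := by
  classical
  rw [rank_eq_finrank_range_toLin A (PiLp.basisFun 2 ℝ (Fin n)) (PiLp.basisFun 2 ℝ (Fin m)),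
    ← toLpLin_eq_toLin, add_comm, LinearMap.finrank_range_add_finrank_ker,
    finrank_euclideanSpace_fin]

end EuclideanRow

section Approximation

variable {n m : ℕ}

lemma frobNorm_sq (A : Matrix (Fin n) (Fin m) ℝ) :
    frobNorm A ^ 2 = ∑ i, ‖euclideanRow A i‖ ^ 2 := by
  rw [frobNorm, Real.sq_sqrt (by positivity)]
  simp [EuclideanSpace.norm_sq_eq, euclideanRow]

lemma specNorm_eq_l2_opNorm (A : Matrix (Fin n) (Fin m) ℝ) : specNorm A = ‖A‖ := by
  have hball : ∀ x : EuclideanSpace ℝ (Fin m), ‖x‖ ≤ 1 ↔ ∑ j, x j ^ 2 ≤ 1 := fun x => by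
    rw [← sq_le_one_iff₀ (norm_nonneg x), EuclideanSpace.norm_sq_eq]
    simp
  have hterm : ∀ x : Fin m → ℝ,
      Real.sqrt (∑ i, (A *ᵥ x) i ^ 2) = ‖toLpLin 2 2 A (WithLp.toLp 2 x)‖ := fun x => by
    rw [EuclideanSpace.norm_eq]
    simp [toLpLin_apply]
  have hle : ∀ x : {x : Fin m → ℝ // ∑ j, x j ^ 2 ≤ 1},
      Real.sqrt (∑ i, (A *ᵥ x.1) i ^ 2) ≤ ‖A‖ := fun x => by
    rw [hterm]
    simpa using A.l2_opNorm_mulVec (WithLp.toLp 2 x.1) |>.trans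
      (mul_le_of_le_one_right (norm_nonneg A) ((hball _).2 x.2))
  have : Nonempty {x : Fin m → ℝ // ∑ j, x j ^ 2 ≤ 1} := ⟨⟨0, by simp⟩⟩
  refine le_antisymm (ciSup_le hle) ?_
  rw [l2_opNorm_def, ← ContinuousLinearMap.sSup_unitClosedBall_eq_norm]
  refine csSup_le ((Metric.nonempty_closedBall.2 zero_le_one).image _) ?_
  rintro - ⟨x, hx, rfl⟩
  refine le_trans (le_of_eq ?_) (le_ciSup ⟨‖A‖, Set.forall_mem_range.2 hle⟩
    ⟨x.ofLp, (hball x).1 (mem_closedBall_zero_iff.1 hx)⟩)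
  exact (hterm x.ofLp).symm

lemma frobNorm_sq_le_rank_mul (A : Matrix (Fin n) (Fin m) ℝ) :
    frobNorm A ^ 2 ≤ A.rank * ‖A‖ ^ 2 := by
  rw [frobNorm_sq, rank_eq_finrank_rowSpace,
    ← capturedEnergy_eq_sum_norm_sq _ (W := rowSpace A) fun i => subset_span ⟨i, rfl⟩]
  exact capturedEnergy_le_finrank_mul _ ((l2_opNorm_le_iff (norm_nonneg A)).1 le_rfl) _

def IsBestRankApprox (k : ℕ) (ϑ ϑ₂ : Matrix (Fin n) (Fin m) ℝ) : Prop :=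
  ϑ₂.rank ≤ k ∧ ∀ M : Matrix (Fin n) (Fin m) ℝ, M.rank ≤ k → frobNorm (ϑ - ϑ₂) ≤ frobNorm (ϑ - M)

lemma frobNorm_sub_sq {W : Submodule ℝ (EuclideanSpace ℝ (Fin m))} (A : Matrix (Fin n) (Fin m) ℝ)
    {C : Matrix (Fin n) (Fin m) ℝ} (hC : ∀ i, euclideanRow C i ∈ W) :
    frobNorm (A - C) ^ 2 = ∑ i, ‖euclideanRow A i‖ ^ 2 - capturedEnergy (euclideanRow A) W +
      ∑ i, ‖W.starProjection (euclideanRow A i) - euclideanRow C i‖ ^ 2 := by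
  rw [frobNorm_sq, euclideanRow_sub, capturedEnergy, ← Finset.sum_sub_distrib,
    ← Finset.sum_add_distrib]
  exact Finset.sum_congr rfl fun i _ => norm_sub_sq_eq_of_mem (hC i)

noncomputable def projectRows (W : Submodule ℝ (EuclideanSpace ℝ (Fin m)))
    (A : Matrix (Fin n) (Fin m) ℝ) : Matrix (Fin n) (Fin m) ℝ :=
  Matrix.of fun i => (W.starProjection (euclideanRow A i)).ofLp

lemma euclideanRow_projectRows (W : Submodule ℝ (EuclideanSpace ℝ (Fin m)))
    (A : Matrix (Fin n) (Fin m) ℝ) (i : Fin n) :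
    euclideanRow (projectRows W A) i = W.starProjection (euclideanRow A i) := rfl

lemma frobNorm_sub_projectRows_sq (W : Submodule ℝ (EuclideanSpace ℝ (Fin m)))
    (A : Matrix (Fin n) (Fin m) ℝ) :
    frobNorm (A - projectRows W A) ^ 2 =
      ∑ i, ‖euclideanRow A i‖ ^ 2 - capturedEnergy (euclideanRow A) W := by
  simp [frobNorm_sub_sq A (fun i => (euclideanRow_projectRows W A i).symm ▸
    W.starProjection_apply_mem _), euclideanRow_projectRows]

variable {k : ℕ} {ϑ ϑ₂ : Matrix (Fin n) (Fin m) ℝ}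

lemma IsBestRankApprox.capturedEnergy_add_le (hbest : IsBestRankApprox k ϑ ϑ₂)
    {W : Submodule ℝ (EuclideanSpace ℝ (Fin m))} (hW : finrank ℝ W ≤ k) :
    capturedEnergy (euclideanRow ϑ) W +
        ∑ i, ‖(rowSpace ϑ₂).starProjection (euclideanRow ϑ i) - euclideanRow ϑ₂ i‖ ^ 2 ≤
      capturedEnergy (euclideanRow ϑ) (rowSpace ϑ₂) := by
  have hbound := hbest.2 (projectRows W ϑ) ((rank_le_finrank_of_forall_euclideanRow_mem fun i =>
    (euclideanRow_projectRows W ϑ i).symm ▸ W.starProjection_apply_mem _).trans hW)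
  have hsq : frobNorm (ϑ - ϑ₂) ^ 2 ≤ _ := pow_le_pow_left₀ (Real.sqrt_nonneg _) hbound 2
  rw [frobNorm_sub_sq ϑ (W := rowSpace ϑ₂) (fun i => subset_span ⟨i, rfl⟩),
    frobNorm_sub_projectRows_sq] at hsq
  linarith

lemma IsBestRankApprox.finrank_rowSpace_le (hbest : IsBestRankApprox k ϑ ϑ₂) :
    finrank ℝ (rowSpace ϑ₂) ≤ k :=
  rank_eq_finrank_rowSpace ϑ₂ ▸ hbest.1

lemma IsBestRankApprox.capturedEnergy_le (hbest : IsBestRankApprox k ϑ ϑ₂)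
    {W : Submodule ℝ (EuclideanSpace ℝ (Fin m))} (hW : finrank ℝ W ≤ k) :
    capturedEnergy (euclideanRow ϑ) W ≤
      capturedEnergy (euclideanRow ϑ) (rowSpace ϑ₂) :=
  (le_add_of_nonneg_right (by positivity)).trans (hbest.capturedEnergy_add_le hW)

lemma IsBestRankApprox.euclideanRow_eq (hbest : IsBestRankApprox k ϑ ϑ₂) (i : Fin n) :
    euclideanRow ϑ₂ i = (rowSpace ϑ₂).starProjection (euclideanRow ϑ i) := by
  have h := hbest.capturedEnergy_add_le hbest.finrank_rowSpace_le
  have hsum :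
      ∑ i, ‖(rowSpace ϑ₂).starProjection (euclideanRow ϑ i) - euclideanRow ϑ₂ i‖ ^ 2 = 0 :=
    le_antisymm (by linarith) (by positivity)
  have hzero := (Finset.sum_eq_zero_iff_of_nonneg fun i _ => sq_nonneg _).1 hsum i
    (Finset.mem_univ i)
  rw [sq_eq_zero_iff, norm_eq_zero, sub_eq_zero] at hzero
  exact hzero.symm

theorem IsBestRankApprox.l2_opNorm_sub_le {θ : Matrix (Fin n) (Fin m) ℝ} (hθ : θ.rank ≤ k)
    (hbest : IsBestRankApprox k ϑ ϑ₂) : ‖ϑ - ϑ₂‖ ≤ ‖ϑ - θ‖ := by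
  have hK :
      finrank ℝ (EuclideanSpace ℝ (Fin m)) ≤ finrank ℝ (LinearMap.ker (toLpLin 2 2 θ)) + k := by
    have := finrank_ker_toLpLin_add_rank θ
    rw [finrank_euclideanSpace_fin]
    omega
  set K := LinearMap.ker (toLpLin 2 2 θ)
  have hs : ∀ v ∈ K, ∑ i, ⟪euclideanRow ϑ i, v⟫ ^ 2 ≤ ‖ϑ - θ‖ ^ 2 * ‖v‖ ^ 2 := by
    intro v hv
    have hθv : ∀ i, ⟪euclideanRow θ i, v⟫ = 0 := fun i => by
      rw [inner_euclideanRow]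
      exact congrFun (congrArg WithLp.ofLp (LinearMap.mem_ker.1 hv)) i
    simpa [euclideanRow_sub, inner_sub_left, hθv] using
      (l2_opNorm_le_iff (norm_nonneg (ϑ - θ))).1 le_rfl v
  rw [l2_opNorm_le_iff (norm_nonneg _)]
  intro x
  simpa [euclideanRow_sub, ← hbest.euclideanRow_eq] using
    sum_inner_sub_starProjection_sq_le _ hbest.finrank_rowSpace_le
      (fun W hW => hbest.capturedEnergy_le hW) hK hs x

end Approximation

/-- If `θ` has rank at most 2 and `ϑ₂` is a best rank-2 approximation (in
Frobenius norm) of an arbitrary matrix `ϑ`, then `‖θ − ϑ₂‖₂² ≤ 16 ‖θ − ϑ‖²` where the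
right-hand side uses the spectral norm. -/
theorem rank_two_approximation_error
    {n m : ℕ} (θ ϑ ϑ₂ : Matrix (Fin n) (Fin m) ℝ)
    (hθ : θ.rank ≤ 2) (hϑ₂ : ϑ₂.rank ≤ 2)
    (hbest : ∀ M : Matrix (Fin n) (Fin m) ℝ, M.rank ≤ 2 →
      frobNorm (ϑ - ϑ₂) ≤ frobNorm (ϑ - M)) :
    frobNorm (θ - ϑ₂) ^ 2 ≤ 16 * specNorm (θ - ϑ) ^ 2 := by
  have hkey : ‖ϑ - ϑ₂‖ ≤ ‖ϑ - θ‖ := IsBestRankApprox.l2_opNorm_sub_le hθ ⟨hϑ₂, hbest⟩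
  have hrank : ((θ - ϑ₂).rank : ℝ) ≤ 4 := by
    have := rank_sub_le θ ϑ₂
    norm_cast
    omega
  have htri : ‖θ - ϑ₂‖ ≤ 2 * ‖θ - ϑ‖ := by
    have := norm_sub_le_norm_sub_add_norm_sub θ ϑ ϑ₂
    rw [norm_sub_rev ϑ θ] at hkey
    linarith
  rw [specNorm_eq_l2_opNorm]
  calc frobNorm (θ - ϑ₂) ^ 2 ≤ (θ - ϑ₂).rank * ‖θ - ϑ₂‖ ^ 2 := frobNorm_sq_le_rank_mul _
    _ ≤ 4 * (2 * ‖θ - ϑ‖) ^ 2 := by gcongr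
    _ = 16 * ‖θ - ϑ‖ ^ 2 := by ring
end

section
/- Let Θ₁ ⊆ ℝ^N and define the covering number N_ε(Θ₁) under the Euclidean norm. Suppose N_ε(Θ₁) is a decreasing, left-continuous function of ε ∈ (0,1]. Define ε₀ = (1/2)( inf{ε ∈ (0,1] : Nε² > log N_ε(Θ₁)} + sup{ε ∈ (0,1] : Nε² < log N_ε(Θ₁)} ). Then (1/2) log N_{ε₀}(Θ₁) ≤ N ε₀² ≤ log N_{ε₀}(Θ₁). -/
open scoped BigOperators

/-- The `ε`-covering number of a set `Θ₁ ⊆ ℝ^N` under the Euclidean norm: the minimal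
cardinality of a finite set `C` such that every point of `Θ₁` is within distance `ε` of
`C`. -/
noncomputable def covNum {N : ℕ} (Θ₁ : Set (EuclideanSpace ℝ (Fin N))) (ε : ℝ) : ℕ :=
  sInf {c : ℕ | ∃ C : Finset (EuclideanSpace ℝ (Fin N)),
    C.card = c ∧ ∀ x ∈ Θ₁, ∃ y ∈ C, ‖x - y‖ ≤ ε}


lemma covNum_le_card {N : ℕ} {Θ₁ : Set (EuclideanSpace ℝ (Fin N))} {ε : ℝ}
    {C : Finset (EuclideanSpace ℝ (Fin N))} (h : ∀ x ∈ Θ₁, ∃ y ∈ C, ‖x - y‖ ≤ ε) :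
    covNum Θ₁ ε ≤ C.card :=
  Nat.sInf_le ⟨C, rfl, h⟩

lemma covNum_exists {N : ℕ} {Θ₁ : Set (EuclideanSpace ℝ (Fin N))}
    (hTB : ∀ ε : ℝ, 0 < ε → ∃ C : Finset (EuclideanSpace ℝ (Fin N)),
      ∀ x ∈ Θ₁, ∃ y ∈ C, ‖x - y‖ ≤ ε) {ε : ℝ} (hε : 0 < ε) :
    ∃ C : Finset (EuclideanSpace ℝ (Fin N)),
      C.card = covNum Θ₁ ε ∧ ∀ x ∈ Θ₁, ∃ y ∈ C, ‖x - y‖ ≤ ε := by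
  have hne : {c : ℕ | ∃ C : Finset (EuclideanSpace ℝ (Fin N)),
      C.card = c ∧ ∀ x ∈ Θ₁, ∃ y ∈ C, ‖x - y‖ ≤ ε}.Nonempty := by
    obtain ⟨C, hC⟩ := hTB ε hε
    exact ⟨C.card, C, rfl, hC⟩
  exact Nat.sInf_mem hne

lemma limit_cover {N : ℕ} {Θ₁ : Set (EuclideanSpace ℝ (Fin N))}
    {ε₀ : ℝ} (h0 : 0 < ε₀) (c : ℕ)
    (h : ∀ δ : ℝ, 0 < δ → δ ≤ 1 → ∃ C : Finset (EuclideanSpace ℝ (Fin N)),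
      C.card ≤ c ∧ ∀ x ∈ Θ₁, ∃ y ∈ C, ‖x - y‖ ≤ ε₀ + δ) :
    covNum Θ₁ ε₀ ≤ c := by
  classical
  rcases Θ₁.eq_empty_or_nonempty with hemp | ⟨x₀, hx₀⟩
  · have : covNum Θ₁ ε₀ ≤ (∅ : Finset (EuclideanSpace ℝ (Fin N))).card :=
      covNum_le_card (by simp [hemp])
    simpa using this.trans (Nat.zero_le c)
  rcases Nat.eq_zero_or_pos c with hc0 | hc
  · obtain ⟨C, hcard, hcov⟩ := h 1 one_pos le_rfl
    rw [hc0, Nat.le_zero, Finset.card_eq_zero] at hcard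
    obtain ⟨y, hy, -⟩ := hcov x₀ hx₀
    simp [hcard] at hy
  -- a bound on Θ₁
  have hbdd : ∃ R : ℝ, ∀ x ∈ Θ₁, ‖x‖ ≤ R := by
    obtain ⟨C, hC⟩ := h 1 one_pos le_rfl
    have hCne : C.Nonempty := by
      obtain ⟨y, hy, -⟩ := hC.2 x₀ hx₀
      exact ⟨y, hy⟩
    refine ⟨C.sup' hCne (fun y => ‖y‖) + ε₀ + 1, ?_⟩
    · intro x hx
      obtain ⟨y, hy, hxy⟩ := hC.2 x hx
      have h1 : ‖x‖ ≤ ‖x - y‖ + ‖y‖ := by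
        calc ‖x‖ = ‖(x - y) + y‖ := by rw [sub_add_cancel]
          _ ≤ ‖x - y‖ + ‖y‖ := norm_add_le _ _
      have h2 : ‖y‖ ≤ C.sup' hCne (fun y => ‖y‖) := Finset.le_sup' _ hy
      linarith
  obtain ⟨R, hR⟩ := hbdd
  set R' : ℝ := R + ε₀ + 1 with hR'
  have hRR' : R ≤ R' := by simp [hR']; linarith
  -- the compact sets
  set K : ℕ → Set (Fin c → EuclideanSpace ℝ (Fin N)) := fun n =>
    {y | (∀ i, ‖y i‖ ≤ R') ∧ ∀ x ∈ Θ₁, ∃ i, ‖x - y i‖ ≤ ε₀ + 1/((n:ℝ)+1)} with hK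
  have hsub : ∀ n, K (n+1) ⊆ K n := by
    intro n y hy
    refine ⟨hy.1, fun x hx => ?_⟩
    obtain ⟨i, hi⟩ := hy.2 x hx
    refine ⟨i, hi.trans ?_⟩
    have : (1 : ℝ)/((n:ℝ)+1+1) ≤ 1/((n:ℝ)+1) := by
      apply one_div_le_one_div_of_le <;> push_cast <;> linarith
    push_cast
    linarith
  have hclosed : ∀ n, IsClosed (K n) := by
    intro n
    have h1 : IsClosed {y : Fin c → EuclideanSpace ℝ (Fin N) | ∀ i, ‖y i‖ ≤ R'} := by
      have : {y : Fin c → EuclideanSpace ℝ (Fin N) | ∀ i, ‖y i‖ ≤ R'}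
          = ⋂ i, {y | ‖y i‖ ≤ R'} := by ext y; simp
      rw [this]
      exact isClosed_iInter fun i =>
        isClosed_le ((continuous_apply i).norm) continuous_const
    have h2 : IsClosed {y : Fin c → EuclideanSpace ℝ (Fin N) |
        ∀ x ∈ Θ₁, ∃ i, ‖x - y i‖ ≤ ε₀ + 1/((n:ℝ)+1)} := by
      have : {y : Fin c → EuclideanSpace ℝ (Fin N) |
          ∀ x ∈ Θ₁, ∃ i, ‖x - y i‖ ≤ ε₀ + 1/((n:ℝ)+1)}
          = ⋂ x ∈ Θ₁, ⋃ i, {y | ‖x - y i‖ ≤ ε₀ + 1/((n:ℝ)+1)} := by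
        ext y; simp
      rw [this]
      exact isClosed_biInter fun x hx => isClosed_iUnion_of_finite fun i =>
        isClosed_le ((continuous_const.sub (continuous_apply i)).norm) continuous_const
    exact h1.inter h2
  have hcpt : IsCompact (K 0) := by
    apply IsCompact.of_isClosed_subset
      (isCompact_univ_pi fun _ : Fin c => isCompact_closedBall (0 : EuclideanSpace ℝ (Fin N)) R')
      (hclosed 0)
    intro y hy
    rw [Set.mem_univ_pi]
    intro i
    rw [mem_closedBall_zero_iff]
    exact hy.1 i
  have hne : ∀ n, (K n).Nonempty := by
    intro n
    have hδpos : (0:ℝ) < 1/((n:ℝ)+1) := by positivity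
    have hδle : (1:ℝ)/((n:ℝ)+1) ≤ 1 := by
      rw [div_le_one (by positivity)]; push_cast; linarith [Nat.cast_nonneg (α := ℝ) n]
    obtain ⟨C, hcard, hcov⟩ := h _ hδpos hδle
    set C' : Finset (EuclideanSpace ℝ (Fin N)) :=
      C.image (fun z => if ‖z‖ ≤ R' then z else x₀) with hC'
    have hcov' : ∀ x ∈ Θ₁, ∃ y ∈ C', ‖x - y‖ ≤ ε₀ + 1/((n:ℝ)+1) := by
      intro x hx
      obtain ⟨y, hy, hxy⟩ := hcov x hx
      have hyR : ‖y‖ ≤ R' := by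
        have h1 : ‖y‖ ≤ ‖x - y‖ + ‖x‖ := by
          calc ‖y‖ = ‖x - (x - y)‖ := by rw [sub_sub_cancel]
            _ ≤ ‖x‖ + ‖x - y‖ := norm_sub_le _ _
            _ = ‖x - y‖ + ‖x‖ := by ring
        calc ‖y‖ ≤ ‖x - y‖ + ‖x‖ := h1
          _ ≤ (ε₀ + 1/((n:ℝ)+1)) + R := add_le_add hxy (hR x hx)
          _ ≤ R' := by rw [hR']; linarith
      refine ⟨y, ?_, hxy⟩
      rw [hC', Finset.mem_image]
      exact ⟨y, hy, by rw [if_pos hyR]⟩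
    have hC'R : ∀ z ∈ C', ‖z‖ ≤ R' := by
      intro z hz
      rw [hC', Finset.mem_image] at hz
      obtain ⟨w, hw, rfl⟩ := hz
      split_ifs with hw'
      · exact hw'
      · exact (hR x₀ hx₀).trans hRR'
    have hcard' : C'.card ≤ c := (Finset.card_image_le).trans hcard
    -- build the tuple
    set l := C'.toList with hl
    have hlen : l.length = C'.card := Finset.length_toList C'
    refine ⟨fun i => l.getD i x₀, ?_, ?_⟩
    · intro i
      show ‖l.getD (i : ℕ) x₀‖ ≤ R'
      by_cases hi : (i : ℕ) < l.length
      · rw [List.getD_eq_getElem l x₀ hi]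
        exact hC'R _ (Finset.mem_toList.mp (List.getElem_mem hi))
      · rw [List.getD_eq_default l x₀ (le_of_not_gt hi)]
        exact (hR x₀ hx₀).trans hRR'
    · intro x hx
      obtain ⟨z, hz, hxz⟩ := hcov' x hx
      have hzl : z ∈ l := Finset.mem_toList.mpr hz
      obtain ⟨j, hj, hje⟩ := List.mem_iff_getElem.mp hzl
      have hjc : j < c := lt_of_lt_of_le (hlen ▸ hj) hcard'
      refine ⟨⟨j, hjc⟩, ?_⟩
      show ‖x - l.getD ((⟨j, hjc⟩ : Fin c) : ℕ) x₀‖ ≤ _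
      rw [List.getD_eq_getElem l x₀ hj, hje]
      exact hxz
  obtain ⟨y, hy⟩ := IsCompact.nonempty_iInter_of_sequence_nonempty_isCompact_isClosed
    K hsub hne hcpt hclosed
  rw [Set.mem_iInter] at hy
  set Cf : Finset (EuclideanSpace ℝ (Fin N)) := Finset.image y Finset.univ with hCf
  have hcov : ∀ x ∈ Θ₁, ∃ z ∈ Cf, ‖x - z‖ ≤ ε₀ := by
    intro x hx
    have hune : (Finset.univ : Finset (Fin c)).Nonempty := ⟨⟨0, hc⟩, Finset.mem_univ _⟩
    set m := Finset.univ.inf' hune (fun i => ‖x - y i‖) with hm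
    have hmle : m ≤ ε₀ := by
      apply le_of_forall_pos_le_add
      intro η hη
      obtain ⟨n, hn⟩ := exists_nat_one_div_lt hη
      obtain ⟨i, hi⟩ := (hy n).2 x hx
      calc m ≤ ‖x - y i‖ := Finset.inf'_le _ (Finset.mem_univ i)
        _ ≤ ε₀ + 1/((n:ℝ)+1) := hi
        _ ≤ ε₀ + η := by linarith
    obtain ⟨i, -, hieq⟩ := Finset.exists_mem_eq_inf' hune (fun i => ‖x - y i‖)
    exact ⟨y i, Finset.mem_image_of_mem y (Finset.mem_univ i), by rw [← hieq]; exact hmle⟩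
  calc covNum Θ₁ ε₀ ≤ Cf.card := covNum_le_card hcov
    _ ≤ (Finset.univ : Finset (Fin c)).card := by rw [hCf]; exact Finset.card_image_le
    _ = c := by simp

lemma right_const {N : ℕ} {Θ₁ : Set (EuclideanSpace ℝ (Fin N))}
    (hTB : ∀ ε : ℝ, 0 < ε → ∃ C : Finset (EuclideanSpace ℝ (Fin N)),
      ∀ x ∈ Θ₁, ∃ y ∈ C, ‖x - y‖ ≤ ε)
    (hmono : ∀ ε ε' : ℝ, 0 < ε → ε ≤ ε' → ε' ≤ 1 → covNum Θ₁ ε' ≤ covNum Θ₁ ε)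
    {ε₀ : ℝ} (h0 : 0 < ε₀) (h1 : ε₀ < 1) :
    ∃ ε₁ : ℝ, ε₀ < ε₁ ∧ ε₁ ≤ 1 ∧
      ∀ ε : ℝ, ε₀ < ε → ε ≤ ε₁ → covNum Θ₁ ε = covNum Θ₁ ε₀ := by
  set S : Set ℕ := covNum Θ₁ '' Set.Ioc ε₀ 1 with hS
  have hSne : S.Nonempty := ⟨covNum Θ₁ 1, 1, ⟨h1, le_rfl⟩, rfl⟩
  have hSbdd : BddAbove S := by
    refine ⟨covNum Θ₁ ε₀, ?_⟩
    rintro m ⟨ε, ⟨hε1, hε2⟩, rfl⟩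
    exact hmono ε₀ ε h0 hε1.le hε2
  obtain ⟨ε₁, ⟨hε₁1, hε₁2⟩, hLeq⟩ := Nat.sSup_mem hSne hSbdd
  set L := sSup S with hL
  refine ⟨ε₁, hε₁1, hε₁2, ?_⟩
  have hconst : ∀ ε : ℝ, ε₀ < ε → ε ≤ ε₁ → covNum Θ₁ ε = L := by
    intro ε hε1 hε2
    have hub : covNum Θ₁ ε ≤ L :=
      le_csSup hSbdd ⟨ε, ⟨hε1, hε2.trans hε₁2⟩, rfl⟩
    have hlb : L ≤ covNum Θ₁ ε := hLeq ▸ hmono ε ε₁ (h0.trans hε1) hε2 hε₁2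
    omega
  have hL0 : covNum Θ₁ ε₀ = L := by
    have hle : covNum Θ₁ ε₀ ≤ L := by
      apply limit_cover h0
      intro δ hδ hδ1
      have hr : ε₀ < min (ε₀ + δ) ε₁ := lt_min (by linarith) hε₁1
      have hr2 : min (ε₀ + δ) ε₁ ≤ ε₁ := min_le_right _ _
      obtain ⟨C, hcard, hcov⟩ := covNum_exists hTB (h0.trans hr)
      refine ⟨C, ?_, fun x hx => ?_⟩
      · rw [hcard, hconst _ hr hr2]
      · obtain ⟨y, hy, hxy⟩ := hcov x hx
        exact ⟨y, hy, hxy.trans ((min_le_left _ _))⟩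
    have hge : L ≤ covNum Θ₁ ε₀ := hLeq ▸ hmono ε₀ ε₁ h0 hε₁1.le hε₁2
    omega
  intro ε hε1 hε2
  rw [hconst ε hε1 hε2, hL0]

lemma log_nat_mono {m n : ℕ} (h : m ≤ n) : Real.log m ≤ Real.log n := by
  rcases Nat.eq_zero_or_pos m with hm | hm
  · rw [hm]; simpa using Real.log_natCast_nonneg n
  · exact Real.log_le_log (by exact_mod_cast hm) (by exact_mod_cast h)

/-- Let `ε₀` be the critical covering radius balancing `Nε²` against the
metric entropy `log N_ε(Θ₁)`. If `ε ↦ N_ε(Θ₁)` is decreasing and left-continuous on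
`(0,1]`, then `(1/2) log N_{ε₀}(Θ₁) ≤ N ε₀² ≤ log N_{ε₀}(Θ₁)`. -/
theorem critical_radius_entropy_sandwich
    {N : ℕ} (Θ₁ : Set (EuclideanSpace ℝ (Fin N)))
    -- `Θ₁` admits a finite `ε`-net for every `ε > 0`
    (hTB : ∀ ε : ℝ, 0 < ε → ∃ C : Finset (EuclideanSpace ℝ (Fin N)),
      ∀ x ∈ Θ₁, ∃ y ∈ C, ‖x - y‖ ≤ ε)
    -- the covering number is decreasing on `(0,1]`
    (hmono : ∀ ε ε' : ℝ, 0 < ε → ε ≤ ε' → ε' ≤ 1 → covNum Θ₁ ε' ≤ covNum Θ₁ ε)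
    -- the covering number is left-continuous on `(0,1]`
    (hlc : ∀ ε ∈ Set.Ioc (0 : ℝ) 1, ∃ δ > 0, ∀ ε' : ℝ,
      ε - δ < ε' → ε' ≤ ε → 0 < ε' → covNum Θ₁ ε' = covNum Θ₁ ε)
    -- the sets defining the critical radius are nonempty
    (hne₁ : ∃ ε ∈ Set.Ioc (0 : ℝ) 1, Real.log (covNum Θ₁ ε) < N * ε ^ 2)
    (hne₂ : ∃ ε ∈ Set.Ioc (0 : ℝ) 1, (N : ℝ) * ε ^ 2 < Real.log (covNum Θ₁ ε))
    (ε₀ : ℝ)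
    (hε₀ : ε₀ = (1 / 2) *
      (sInf {ε ∈ Set.Ioc (0 : ℝ) 1 | Real.log (covNum Θ₁ ε) < N * ε ^ 2} +
       sSup {ε ∈ Set.Ioc (0 : ℝ) 1 | (N : ℝ) * ε ^ 2 < Real.log (covNum Θ₁ ε)})) :
    (1 / 2) * Real.log (covNum Θ₁ ε₀) ≤ (N : ℝ) * ε₀ ^ 2 ∧
      (N : ℝ) * ε₀ ^ 2 ≤ Real.log (covNum Θ₁ ε₀) := by
  set A : Set ℝ := {ε ∈ Set.Ioc (0 : ℝ) 1 | Real.log (covNum Θ₁ ε) < N * ε ^ 2} with hA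
  set B : Set ℝ := {ε ∈ Set.Ioc (0 : ℝ) 1 | (N : ℝ) * ε ^ 2 < Real.log (covNum Θ₁ ε)} with hB
  obtain ⟨εa, hεaI, hεa⟩ := hne₁
  obtain ⟨εb, hεbI, hεb⟩ := hne₂
  have hεaA : εa ∈ A := ⟨hεaI, hεa⟩
  have hεbB : εb ∈ B := ⟨hεbI, hεb⟩
  have hAne : A.Nonempty := ⟨εa, hεaA⟩
  have hBne : B.Nonempty := ⟨εb, hεbB⟩
  have bddA : BddBelow A := ⟨0, fun x hx => hx.1.1.le⟩
  have bddB : BddAbove B := ⟨1, fun x hx => hx.1.2⟩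
  have hN0 : (0 : ℝ) ≤ N := Nat.cast_nonneg N
  have hNpos : (0 : ℝ) < N := by
    have h1 : (0:ℝ) < (N:ℝ) * εa ^ 2 :=
      lt_of_le_of_lt (Real.log_natCast_nonneg _) hεa
    nlinarith [sq_nonneg εa]
  have hAB : ∀ x ∈ B, ∀ y ∈ A, x < y := by
    rintro x ⟨hxI, hx⟩ y ⟨hyI, hy⟩
    by_contra hle
    push_neg at hle
    have h1 : covNum Θ₁ x ≤ covNum Θ₁ y := hmono y x hyI.1 hle hxI.2
    have h2 : Real.log (covNum Θ₁ x) ≤ Real.log (covNum Θ₁ y) := log_nat_mono h1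
    have h3 : (N:ℝ) * y ^ 2 ≤ (N:ℝ) * x ^ 2 :=
      mul_le_mul_of_nonneg_left (pow_le_pow_left₀ hyI.1.le hle 2) hN0
    linarith
  set a : ℝ := sInf A with ha
  set b : ℝ := sSup B with hb
  have hba : b ≤ a := csSup_le hBne fun x hx => le_csInf hAne fun y hy => (hAB x hx y hy).le
  have hb0 : 0 < b := lt_of_lt_of_le hεbI.1 (le_csSup bddB hεbB)
  have ha1 : a ≤ 1 := (csInf_le bddA hεaA).trans hεaI.2
  have hε₀' : ε₀ = (a + b) / 2 := by rw [hε₀]; ring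
  have hε₀b : b ≤ ε₀ := by rw [hε₀']; linarith
  have hε₀a : ε₀ ≤ a := by rw [hε₀']; linarith
  have hε₀pos : 0 < ε₀ := lt_of_lt_of_le hb0 hε₀b
  have hε₀I : ε₀ ∈ Set.Ioc (0:ℝ) 1 := ⟨hε₀pos, hε₀a.trans ha1⟩
  have hf0 : 0 ≤ Real.log (covNum Θ₁ ε₀) := Real.log_natCast_nonneg _
  -- upper claim : N ε₀² ≤ log covNum ε₀
  have hupper : (N : ℝ) * ε₀ ^ 2 ≤ Real.log (covNum Θ₁ ε₀) := by
    by_cases hmem : ε₀ ∈ B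
    · exact hmem.2.le
    by_cases hlt : ε₀ < a
    · have hnA : ε₀ ∉ A := fun h => absurd (csInf_le bddA h) (not_le.mpr hlt)
      have : ¬(Real.log (covNum Θ₁ ε₀) < (N:ℝ) * ε₀ ^ 2) := fun h => hnA ⟨hε₀I, h⟩
      exact le_of_not_gt this
    · have haε : a = ε₀ := le_antisymm (not_lt.mp hlt) hε₀a
      have hbε : b = ε₀ := by rw [hε₀'] at *; linarith
      obtain ⟨δ, hδ, hδc⟩ := hlc ε₀ hε₀I
      have T : Filter.Tendsto (fun η : ℝ => (N:ℝ) * (ε₀ - η) ^ 2) (nhdsWithin 0 (Set.Ioi 0))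
          (nhds ((N:ℝ) * ε₀ ^ 2)) := by
        have hc : Continuous (fun η : ℝ => (N:ℝ) * (ε₀ - η) ^ 2) :=
          continuous_const.mul ((continuous_const.sub continuous_id).pow 2)
        have := hc.tendsto 0
        simp only [sub_zero] at this
        exact this.mono_left nhdsWithin_le_nhds
      apply le_of_tendsto T
      have hIoo : Set.Ioo (0:ℝ) (min δ ε₀) ∈ nhdsWithin (0:ℝ) (Set.Ioi 0) :=
        Ioo_mem_nhdsGT_of_mem ⟨le_rfl, lt_min hδ hε₀pos⟩
      filter_upwards [hIoo] with η hη
      obtain ⟨hη0, hηlt⟩ := hη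
      have hηδ : η < δ := lt_of_lt_of_le hηlt (min_le_left _ _)
      have hηε : η < ε₀ := lt_of_lt_of_le hηlt (min_le_right _ _)
      have hbgt : ε₀ - η < b := by rw [hbε]; linarith
      obtain ⟨ε, hεB, hεgt⟩ := exists_lt_of_lt_csSup hBne hbgt
      have hεle : ε ≤ ε₀ := hbε ▸ le_csSup bddB hεB
      have heq : covNum Θ₁ ε = covNum Θ₁ ε₀ := hδc ε (by linarith) hεle hεB.1.1
      have hsq : (N:ℝ) * (ε₀ - η) ^ 2 ≤ (N:ℝ) * ε ^ 2 :=
        mul_le_mul_of_nonneg_left (pow_le_pow_left₀ (by linarith) hεgt.le 2) hN0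
      calc (N:ℝ) * (ε₀ - η) ^ 2 ≤ (N:ℝ) * ε ^ 2 := hsq
        _ ≤ Real.log (covNum Θ₁ ε) := hεB.2.le
        _ = Real.log (covNum Θ₁ ε₀) := by rw [heq]
  -- lower claim
  have hlower : (1 / 2) * Real.log (covNum Θ₁ ε₀) ≤ (N : ℝ) * ε₀ ^ 2 := by
    by_cases hmemA : ε₀ ∈ A
    · have := hmemA.2
      linarith
    by_cases hbe : b < ε₀
    · have hnB : ε₀ ∉ B := fun h => absurd (le_csSup bddB h) (not_le.mpr hbe)
      have hle : Real.log (covNum Θ₁ ε₀) ≤ (N:ℝ) * ε₀ ^ 2 :=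
        le_of_not_gt fun h => hnB ⟨hε₀I, h⟩
      linarith
    · have hbε : b = ε₀ := le_antisymm hε₀b (not_lt.mp hbe)
      have haε : a = ε₀ := by rw [hε₀'] at *; linarith
      have hε₀lt1 : ε₀ < 1 := by
        obtain ⟨y, hy⟩ := hAne
        have h1 : a ≤ y := csInf_le bddA hy
        have h2 : y ≠ ε₀ := fun h => hmemA (h ▸ hy)
        have h3 : ε₀ < y := lt_of_le_of_ne (haε ▸ h1) (Ne.symm h2)
        exact lt_of_lt_of_le h3 hy.1.2
      obtain ⟨ε₁, hε₁gt, hε₁le, hconst⟩ := right_const hTB hmono hε₀pos hε₀lt1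
      have hle : Real.log (covNum Θ₁ ε₀) ≤ (N:ℝ) * ε₀ ^ 2 := by
        have T : Filter.Tendsto (fun η : ℝ => (N:ℝ) * (ε₀ + η) ^ 2) (nhdsWithin 0 (Set.Ioi 0))
            (nhds ((N:ℝ) * ε₀ ^ 2)) := by
          have hc : Continuous (fun η : ℝ => (N:ℝ) * (ε₀ + η) ^ 2) :=
            continuous_const.mul ((continuous_const.add continuous_id).pow 2)
          have := hc.tendsto 0
          simp only [add_zero] at this
          exact this.mono_left nhdsWithin_le_nhds
        apply ge_of_tendsto T
        have hIoo : Set.Ioo (0:ℝ) (ε₁ - ε₀) ∈ nhdsWithin (0:ℝ) (Set.Ioi 0) :=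
          Ioo_mem_nhdsGT_of_mem ⟨le_rfl, by linarith⟩
        filter_upwards [hIoo] with η hη
        obtain ⟨hη0, hηlt⟩ := hη
        have hinf : sInf A < ε₀ + η := by rw [← ha, haε]; linarith
        obtain ⟨ε, hεA, hεlt⟩ := exists_lt_of_csInf_lt hAne hinf
        have h1 : ε₀ ≤ ε := by
          have := csInf_le bddA hεA
          rw [← ha, haε] at this
          exact this
        have h2 : ε₀ < ε := lt_of_le_of_ne h1 fun h => hmemA (h ▸ hεA)
        have h3 : ε ≤ ε₁ := by linarith
        have heq : covNum Θ₁ ε = covNum Θ₁ ε₀ := hconst ε h2 h3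
        have hsq : (N:ℝ) * ε ^ 2 ≤ (N:ℝ) * (ε₀ + η) ^ 2 :=
          mul_le_mul_of_nonneg_left (pow_le_pow_left₀ (by linarith) hεlt.le 2) hN0
        calc Real.log (covNum Θ₁ ε₀) = Real.log (covNum Θ₁ ε) := by rw [heq]
          _ ≤ (N:ℝ) * ε ^ 2 := hεA.2.le
          _ ≤ (N:ℝ) * (ε₀ + η) ^ 2 := hsq
      linarith
  exact ⟨hlower, hupper⟩
end
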